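/- arXiv:2210.17137 — 3 statements merged into one kernel-verified Lean document; each statement's English description precedes it below -/
import Mathlib

section
/- Representation formula for split-harmonic maps (uniqueness up to a constant): let Ω ⊆ ℂ' be open and connected, and let h₁, h₂, g₁, g₂ : Ω → ℂ' be split-holomorphic maps with h₁(z) + conj(g₁(z)) = h₂(z) + conj(g₂(z)) for all z ∈ Ω. Then h₁ − h₂ is constant on Ω (and consequently g₁ − g₂ is constant on Ω). -/
noncomputable section

/-- The split-complex numbers `ℂ'`, as the set `ℝ × ℝ`
(writing `a + k'b` for `(a, b)`). -/
abbrev SC : Type := ℝ × ℝ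

namespace SC

/-- Split-complex multiplication: `(a,b)·(c,d) = (ac+bd, ad+bc)`, so `k'² = 1`. -/
def mul' (z w : SC) : SC := (z.1 * w.1 + z.2 * w.2, z.1 * w.2 + z.2 * w.1)

/-- Split-complex conjugation: `conj (a + k'b) = a - k'b`. -/
def conj' (z : SC) : SC := (z.1, -z.2)

/-- Multiplication by `k'`. -/
def kmul (z : SC) : SC := (z.2, z.1)

/-- Split-complex natural power. -/
def pow' (z : SC) : ℕ → SC
  | 0 => (1, 0)
  | n + 1 => mul' (pow' z n) z

end SC

/-- The squared "norm" `|a + k'b|² = b² - a²`. -/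
def snormSq (w : SC) : ℝ := w.2 ^ 2 - w.1 ^ 2

/-- Partial derivative in the `x` direction. -/
def pdx {E : Type*} [NormedAddCommGroup E] [NormedSpace ℝ E] (F : SC → E) (p : SC) : E :=
  fderiv ℝ F p (1, 0)

/-- Partial derivative in the `y` direction. -/
def pdy {E : Type*} [NormedAddCommGroup E] [NormedSpace ℝ E] (F : SC → E) (p : SC) : E :=
  fderiv ℝ F p (0, 1)

/-- `F_z = (1/2)(F_x + k' F_y)` of a split-complex valued map. -/
def dz (F : SC → SC) (p : SC) : SC := (1 / 2 : ℝ) • (pdx F p + SC.kmul (pdy F p))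

/-- `F_z̄ = (1/2)(F_x - k' F_y)` of a split-complex valued map. -/
def dzbar (F : SC → SC) (p : SC) : SC := (1 / 2 : ℝ) • (pdx F p - SC.kmul (pdy F p))

/-- `f_z = (1/2)(f_x + k' f_y)` of a real valued map. -/
def rdz (f : SC → ℝ) (p : SC) : SC := (pdx f p / 2, pdy f p / 2)

/-- Lorentz–Minkowski 3-space `𝕃³`, as `ℝ × ℝ × ℝ`. -/
abbrev L3 : Type := ℝ × ℝ × ℝ

/-- The Lorentzian inner product `⟨a,b⟩ = -a₁b₁ + a₂b₂ + a₃b₃`. -/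
def ldot (a b : L3) : ℝ := -(a.1 * b.1) + a.2.1 * b.2.1 + a.2.2 * b.2.2

/-- The conditions for a (smooth) map `F = (u,v,ω) : Ω → 𝕃³` to be a generalized timelike
minimal surface: `F_xx - F_yy = 0`, conformality, and `-|u_z|² + |v_z|² + |ω_z|² ≢ 0` on `Ω`. -/
def IsGTM (Ω : Set SC) (F : SC → L3) : Prop :=
  (∀ p ∈ Ω, pdx (pdx F) p = pdy (pdy F) p) ∧
  (∀ p ∈ Ω, ldot (pdx F p) (pdx F p) + ldot (pdy F p) (pdy F p) = 0) ∧
  (∀ p ∈ Ω, ldot (pdx F p) (pdy F p) = 0) ∧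
  ¬ (∀ p ∈ Ω,
      -snormSq (rdz (fun q => (F q).1) p) + snormSq (rdz (fun q => (F q).2.1) p) +
        snormSq (rdz (fun q => (F q).2.2) p) = 0)

/-- The Euclidean ball `B_R(η)` in the split-complex plane. -/
def eball (η : SC) (R : ℝ) : Set SC := {z | (z.1 - η.1) ^ 2 + (z.2 - η.2) ^ 2 < R ^ 2}

/-- A smooth map `f = u + k'v` is split-holomorphic on `Ω` if it satisfies the split
Cauchy–Riemann equations `u_x = v_y`, `u_y = v_x` on `Ω`. -/
def SplitHoloOn (Ω : Set SC) (f : SC → SC) : Prop :=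
  ContDiffOn ℝ (⊤ : ℕ∞) f Ω ∧
    ∀ p ∈ Ω, (pdx f p).1 = (pdy f p).2 ∧ (pdx f p).2 = (pdy f p).1

/-- `f` is split-analytic on `Ω`: around every point of `Ω` it is given by a convergent
power series in the split-complex variable (in the Euclidean topology). -/
def SplitAnalyticOn (Ω : Set SC) (f : SC → SC) : Prop :=
  ∀ η ∈ Ω, ∃ R > 0, eball η R ⊆ Ω ∧ ∃ cs : ℕ → SC,
    ∀ z ∈ eball η R, HasSum (fun n => SC.mul' (cs n) (SC.pow' (z - η) n)) (f z)

/-- A differentiable map with vanishing derivative on an open connected set is constant. -/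
lemma const_of_fderiv_zero_aux {E F : Type*} [NormedAddCommGroup E] [NormedSpace ℝ E]
    [NormedAddCommGroup F] [NormedSpace ℝ F]
    {Ω : Set E} (hΩo : IsOpen Ω) (hΩc : IsConnected Ω) {f : E → F}
    (hd : DifferentiableOn ℝ f Ω) (h0 : ∀ p ∈ Ω, fderiv ℝ f p = 0) :
    ∃ C, ∀ z ∈ Ω, f z = C := by
  obtain ⟨z₀, hz₀⟩ := hΩc.nonempty
  refine ⟨f z₀, ?_⟩
  by_contra hcon
  push_neg at hcon
  obtain ⟨w, hwΩ, hw⟩ := hcon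
  -- A : locally-constant-equal part ; B : not equal part
  set A : Set E := {z | ∃ ε > 0, Metric.ball z ε ⊆ Ω ∧ ∀ y ∈ Metric.ball z ε, f y = f z₀} with hA
  have hAopen : IsOpen A := by
    rw [Metric.isOpen_iff]
    rintro z ⟨ε, hε, hball, hconst⟩
    refine ⟨ε, hε, fun y hy => ?_⟩
    obtain ⟨δ, hδ, hδsub⟩ := Metric.isOpen_iff.1 Metric.isOpen_ball y hy
    exact ⟨δ, hδ, hδsub.trans hball, fun x hx => hconst x (hδsub hx)⟩
  have hBopen : IsOpen (Ω ∩ f ⁻¹' {f z₀}ᶜ) :=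
    hd.continuousOn.isOpen_inter_preimage hΩo isClosed_singleton.isOpen_compl
  -- every point of Ω where f = f z₀ is in A
  have key : ∀ z ∈ Ω, f z = f z₀ → z ∈ A := by
    intro z hz hfz
    obtain ⟨ε, hε, hball⟩ := Metric.isOpen_iff.1 hΩo z hz
    refine ⟨ε, hε, hball, fun y hy => ?_⟩
    have hconv : Convex ℝ (Metric.ball z ε) := convex_ball z ε
    have := hconv.is_const_of_fderivWithin_eq_zero (hd.mono hball)
      (fun x hx => by
        rw [fderivWithin_of_isOpen Metric.isOpen_ball hx]
        exact h0 x (hball hx)) hy (Metric.mem_ball_self hε)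
    rw [this, hfz]
  have cover : Ω ⊆ A ∪ (Ω ∩ f ⁻¹' {f z₀}ᶜ) := by
    intro z hz
    by_cases h : f z = f z₀
    · exact Or.inl (key z hz h)
    · exact Or.inr ⟨hz, h⟩
  have h1 : (Ω ∩ A).Nonempty := ⟨z₀, hz₀, key z₀ hz₀ rfl⟩
  have h2 : (Ω ∩ (Ω ∩ f ⁻¹' {f z₀}ᶜ)).Nonempty := ⟨w, hwΩ, hwΩ, hw⟩
  obtain ⟨x, _, ⟨ε, hε, _, hconst⟩, _, hxne⟩ :=
    hΩc.isPreconnected A _ hAopen hBopen cover h1 h2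
  exact hxne (hconst x (Metric.mem_ball_self hε))

/-- representation formula, uniqueness up to a constant: if
`h₁ + conj ∘ g₁ = h₂ + conj ∘ g₂` on an open connected `Ω` with all four maps
split-holomorphic on `Ω`, then `h₁ - h₂` (and hence `g₁ - g₂`) is constant on `Ω`. -/
theorem splitHarmonic_representation_unique (Ω : Set SC) (hΩo : IsOpen Ω)
    (hΩc : IsConnected Ω) (h₁ h₂ g₁ g₂ : SC → SC)
    (hh₁ : SplitHoloOn Ω h₁) (hh₂ : SplitHoloOn Ω h₂)
    (hg₁ : SplitHoloOn Ω g₁) (hg₂ : SplitHoloOn Ω g₂)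
    (heq : ∀ z ∈ Ω, h₁ z + SC.conj' (g₁ z) = h₂ z + SC.conj' (g₂ z)) :
    (∃ C : SC, ∀ z ∈ Ω, h₁ z - h₂ z = C) ∧ (∃ C : SC, ∀ z ∈ Ω, g₁ z - g₂ z = C) := by
  classical
  set F : SC → SC := fun z => h₁ z - h₂ z with hF
  set G : SC → SC := fun z => g₂ z - g₁ z with hG
  let L : SC →L[ℝ] SC := (ContinuousLinearMap.fst ℝ ℝ ℝ).prod (-(ContinuousLinearMap.snd ℝ ℝ ℝ))
  have hLapp : ∀ v : SC, L v = (v.1, -v.2) := fun v => rfl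
  have dh₁ : ∀ p ∈ Ω, DifferentiableAt ℝ h₁ p := fun p hp =>
    (hh₁.1.differentiableOn (by simp)).differentiableAt (hΩo.mem_nhds hp)
  have dh₂ : ∀ p ∈ Ω, DifferentiableAt ℝ h₂ p := fun p hp =>
    (hh₂.1.differentiableOn (by simp)).differentiableAt (hΩo.mem_nhds hp)
  have dg₁ : ∀ p ∈ Ω, DifferentiableAt ℝ g₁ p := fun p hp =>
    (hg₁.1.differentiableOn (by simp)).differentiableAt (hΩo.mem_nhds hp)
  have dg₂ : ∀ p ∈ Ω, DifferentiableAt ℝ g₂ p := fun p hp =>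
    (hg₂.1.differentiableOn (by simp)).differentiableAt (hΩo.mem_nhds hp)
  have hFG : ∀ z ∈ Ω, F z = L (G z) := by
    intro z hz
    have h := heq z hz
    have h1 := congrArg Prod.fst h
    have h2 := congrArg Prod.snd h
    simp only [SC.conj', Prod.fst_add, Prod.snd_add] at h1 h2
    rw [hLapp]
    apply Prod.ext
    · show (h₁ z).1 - (h₂ z).1 = (g₂ z).1 - (g₁ z).1
      linarith
    · show (h₁ z).2 - (h₂ z).2 = -((g₂ z).2 - (g₁ z).2)
      linarith
  have zeroG : ∀ p ∈ Ω, fderiv ℝ G p = 0 := by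
    intro p hp
    have hGd : DifferentiableAt ℝ G p := (dg₂ p hp).sub (dg₁ p hp)
    have hev : F =ᶠ[nhds p] fun z => L (G z) :=
      Filter.eventuallyEq_of_mem (hΩo.mem_nhds hp) hFG
    have hfe : fderiv ℝ F p = L.comp (fderiv ℝ G p) := by
      rw [hev.fderiv_eq]
      exact (L.hasFDerivAt.comp p hGd.hasFDerivAt).fderiv
    have hFx : fderiv ℝ F p (1, 0) = fderiv ℝ h₁ p (1, 0) - fderiv ℝ h₂ p (1, 0) := by
      rw [hF, fderiv_fun_sub (dh₁ p hp) (dh₂ p hp)]; rfl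
    have hFy : fderiv ℝ F p (0, 1) = fderiv ℝ h₁ p (0, 1) - fderiv ℝ h₂ p (0, 1) := by
      rw [hF, fderiv_fun_sub (dh₁ p hp) (dh₂ p hp)]; rfl
    have hGx : fderiv ℝ G p (1, 0) = fderiv ℝ g₂ p (1, 0) - fderiv ℝ g₁ p (1, 0) := by
      rw [hG, fderiv_fun_sub (dg₂ p hp) (dg₁ p hp)]; rfl
    have hGy : fderiv ℝ G p (0, 1) = fderiv ℝ g₂ p (0, 1) - fderiv ℝ g₁ p (0, 1) := by
      rw [hG, fderiv_fun_sub (dg₂ p hp) (dg₁ p hp)]; rfl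
    have eFx : fderiv ℝ F p (1, 0) = L (fderiv ℝ G p (1, 0)) := by rw [hfe]; rfl
    have eFy : fderiv ℝ F p (0, 1) = L (fderiv ℝ G p (0, 1)) := by rw [hfe]; rfl
    obtain ⟨c1a, c1b⟩ := hh₁.2 p hp
    obtain ⟨c2a, c2b⟩ := hh₂.2 p hp
    obtain ⟨d1a, d1b⟩ := hg₁.2 p hp
    obtain ⟨d2a, d2b⟩ := hg₂.2 p hp
    simp only [pdx, pdy] at c1a c1b c2a c2b d1a d1b d2a d2b
    have CRF1 : (fderiv ℝ G p (1, 0)).1 = -(fderiv ℝ G p (0, 1)).2 := by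
      have e1 : (fderiv ℝ F p (1, 0)).1 = (fderiv ℝ F p (0, 1)).2 := by
        rw [hFx, hFy]
        simp only [Prod.fst_sub, Prod.snd_sub, c1a, c2a]
      rw [eFx, eFy, hLapp, hLapp] at e1
      simpa using e1
    have CRF2 : -(fderiv ℝ G p (1, 0)).2 = (fderiv ℝ G p (0, 1)).1 := by
      have e2 : (fderiv ℝ F p (1, 0)).2 = (fderiv ℝ F p (0, 1)).1 := by
        rw [hFx, hFy]
        simp only [Prod.fst_sub, Prod.snd_sub, c1b, c2b]
      rw [eFx, eFy, hLapp, hLapp] at e2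
      simpa using e2
    have CRG1 : (fderiv ℝ G p (1, 0)).1 = (fderiv ℝ G p (0, 1)).2 := by
      rw [hGx, hGy]
      simp only [Prod.fst_sub, Prod.snd_sub, d1a, d2a]
    have CRG2 : (fderiv ℝ G p (1, 0)).2 = (fderiv ℝ G p (0, 1)).1 := by
      rw [hGx, hGy]
      simp only [Prod.fst_sub, Prod.snd_sub, d1b, d2b]
    have hA : fderiv ℝ G p (1, 0) = 0 := by
      apply Prod.ext
      · show (fderiv ℝ G p (1, 0)).1 = (0 : SC).1
        simp only [Prod.fst_zero]
        linarith
      · show (fderiv ℝ G p (1, 0)).2 = (0 : SC).2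
        simp only [Prod.snd_zero]
        linarith
    have hB : fderiv ℝ G p (0, 1) = 0 := by
      apply Prod.ext
      · show (fderiv ℝ G p (0, 1)).1 = (0 : SC).1
        simp only [Prod.fst_zero]
        linarith
      · show (fderiv ℝ G p (0, 1)).2 = (0 : SC).2
        simp only [Prod.snd_zero]
        linarith
    refine ContinuousLinearMap.ext fun v => ?_
    have hv : v = v.1 • ((1 : ℝ), (0 : ℝ)) + v.2 • ((0 : ℝ), (1 : ℝ)) := by
      apply Prod.ext <;> simp
    rw [hv, map_add, map_smul, map_smul, hA, hB]
    simp
  have zeroF : ∀ p ∈ Ω, fderiv ℝ F p = 0 := by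
    intro p hp
    have hGd : DifferentiableAt ℝ G p := (dg₂ p hp).sub (dg₁ p hp)
    have hev : F =ᶠ[nhds p] fun z => L (G z) :=
      Filter.eventuallyEq_of_mem (hΩo.mem_nhds hp) hFG
    have hfe : fderiv ℝ F p = L.comp (fderiv ℝ G p) := by
      rw [hev.fderiv_eq]
      exact (L.hasFDerivAt.comp p hGd.hasFDerivAt).fderiv
    rw [hfe, zeroG p hp, ContinuousLinearMap.comp_zero]
  have hFdiff : DifferentiableOn ℝ F Ω := fun p hp =>
    ((dh₁ p hp).sub (dh₂ p hp)).differentiableWithinAt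
  have hGdiff : DifferentiableOn ℝ G Ω := fun p hp =>
    ((dg₂ p hp).sub (dg₁ p hp)).differentiableWithinAt
  obtain ⟨C, hC⟩ := const_of_fderiv_zero_aux hΩo hΩc hFdiff zeroF
  obtain ⟨C', hC'⟩ := const_of_fderiv_zero_aux hΩo hΩc hGdiff zeroG
  refine ⟨⟨C, hC⟩, ⟨-C', fun z hz => ?_⟩⟩
  have hz' := hC' z hz
  have : g₂ z - g₁ z = C' := hz'
  rw [show g₁ z - g₂ z = -(g₂ z - g₁ z) by abel, this]
end
end

section
/- Uniqueness of split-Fourier coefficients: let c : ℤ → ℂ' be finitely supported and suppose Σ_{n∈ℤ} c_n · e^{k'nθ} = 0 for every θ ∈ ℝ. Then c_n = 0 for every n ∈ ℤ. Consequently, two finite split-Fourier expansions Σ c_n e^{k'nθ} and Σ c'_n e^{k'nθ} that agree for all θ ∈ ℝ have identical coefficients. -/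
/-! In the null coordinates `a + b`, `a - b` of `a + k'b`, split-complex multiplication becomes
componentwise and `e^{k'nθ}` becomes `(e^{nθ}, e^{-nθ})`. Each null coordinate of a finite
split-Fourier expansion is therefore an ordinary exponential sum `Σ uₙ e^{±nθ}`, whose coefficients
vanish by Dedekind's independence of the characters `θ ↦ e^{nθ}` of `(ℝ, +)`. -/

noncomputable section

/-- The split exponential `e^{k'nθ} = cosh nθ + k' sinh nθ` for `n : ℤ`. -/
def sexpZ (n : ℤ) (θ : ℝ) : SC := (Real.cosh (n * θ), Real.sinh (n * θ))

open Function

def Real.expIntMulChar (n : ℤ) : Multiplicative ℝ →* ℝ where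
  toFun θ := Real.exp (n * θ.toAdd)
  map_one' := by simp
  map_mul' x y := by simp [mul_add, Real.exp_add]

theorem Real.expIntMulChar_injective : Injective Real.expIntMulChar := fun n m h => by
  have h₁ := DFunLike.congr_fun h (Multiplicative.ofAdd 1)
  simp only [Real.expIntMulChar, MonoidHom.coe_mk, OneHom.coe_mk, toAdd_ofAdd, mul_one] at h₁
  exact_mod_cast Real.exp_injective h₁

theorem Real.linearIndependent_exp_int_mul :
    LinearIndependent ℝ (fun (n : ℤ) (θ : ℝ) => Real.exp (n * θ)) :=
  ((linearIndependent_monoidHom (Multiplicative ℝ) ℝ).comp _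
    Real.expIntMulChar_injective).map' (LinearMap.funLeft ℝ ℝ Multiplicative.ofAdd)
      (LinearMap.ker_eq_bot.mpr (LinearMap.funLeft_injective_of_surjective _ _ _
        Multiplicative.ofAdd.surjective))

theorem eq_zero_of_finsum_mul_exp_eq_zero {d : ℤ → ℝ} (hd : HasFiniteSupport d)
    (h : ∀ θ : ℝ, ∑ᶠ n, d n * Real.exp (n * θ) = 0) : d = 0 := by
  funext n
  by_cases hn : n ∈ hd.toFinset
  · refine linearIndependent_iff'.mp Real.linearIndependent_exp_int_mul hd.toFinset d ?_ n hn
    funext θ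
    simp only [Finset.sum_apply, Pi.smul_apply, smul_eq_mul, Pi.zero_apply]
    rw [← h θ, finsum_eq_sum_of_support_subset]
    exact fun m hm => hd.mem_toFinset.mpr (left_ne_zero_of_mul hm)
  · exact notMem_support.mp fun hdn => hn (hd.mem_toFinset.mpr hdn)

namespace SC

theorem zero_mul' (w : SC) : mul' 0 w = 0 := by
  simp [mul']

theorem sub_mul' (z z' w : SC) : mul' (z - z') w = mul' z w - mul' z' w := by
  ext <;> simp only [mul', Prod.fst_sub, Prod.snd_sub] <;> ring

theorem fst_add_snd_mul' (z w : SC) :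
    (mul' z w).1 + (mul' z w).2 = (z.1 + z.2) * (w.1 + w.2) := by
  simp only [mul']; ring

theorem fst_sub_snd_mul' (z w : SC) :
    (mul' z w).1 - (mul' z w).2 = (z.1 - z.2) * (w.1 - w.2) := by
  simp only [mul']; ring

end SC

theorem sexpZ_fst_add_snd (n : ℤ) (θ : ℝ) :
    (sexpZ n θ).1 + (sexpZ n θ).2 = Real.exp (n * θ) :=
  Real.cosh_add_sinh _

theorem sexpZ_fst_sub_snd (n : ℤ) (θ : ℝ) :
    (sexpZ n θ).1 - (sexpZ n θ).2 = Real.exp (n * -θ) := by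
  rw [mul_neg, ← Real.cosh_sub_sinh]
  rfl

def splitFourier (c : ℤ → SC) (θ : ℝ) : SC := ∑ᶠ n, SC.mul' (c n) (sexpZ n θ)

section

variable {c : ℤ → SC}

theorem Function.HasFiniteSupport.mul'_sexpZ (hc : HasFiniteSupport c) (θ : ℝ) :
    HasFiniteSupport fun n => SC.mul' (c n) (sexpZ n θ) :=
  hc.subset <| support_subset_iff'.mpr fun n hn => by
    rw [notMem_support.mp hn, SC.zero_mul']

theorem splitFourier_sub {c' : ℤ → SC} (hc : HasFiniteSupport c) (hc' : HasFiniteSupport c')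
    (θ : ℝ) : splitFourier (c - c') θ = splitFourier c θ - splitFourier c' θ := by
  simp only [splitFourier, Pi.sub_apply, SC.sub_mul']
  exact finsum_sub_distrib (hc.mul'_sexpZ θ) (hc'.mul'_sexpZ θ)

theorem fst_add_snd_splitFourier (hc : HasFiniteSupport c) (θ : ℝ) :
    (splitFourier c θ).1 + (splitFourier c θ).2 =
      ∑ᶠ n, ((c n).1 + (c n).2) * Real.exp (n * θ) := by
  simpa [splitFourier, SC.fst_add_snd_mul', sexpZ_fst_add_snd] using
    (AddMonoidHom.fst ℝ ℝ + AddMonoidHom.snd ℝ ℝ).map_finsum (hc.mul'_sexpZ θ)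

theorem fst_sub_snd_splitFourier (hc : HasFiniteSupport c) (θ : ℝ) :
    (splitFourier c θ).1 - (splitFourier c θ).2 =
      ∑ᶠ n, ((c n).1 - (c n).2) * Real.exp (n * -θ) := by
  simpa [splitFourier, SC.fst_sub_snd_mul', sexpZ_fst_sub_snd] using
    (AddMonoidHom.fst ℝ ℝ - AddMonoidHom.snd ℝ ℝ).map_finsum (hc.mul'_sexpZ θ)

theorem eq_zero_of_splitFourier_eq_zero (hc : HasFiniteSupport c)
    (h : ∀ θ, splitFourier c θ = 0) : c = 0 := by
  have hplus : (fun n => (c n).1 + (c n).2) = 0 :=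
    eq_zero_of_finsum_mul_exp_eq_zero (hc.fst.fun_add hc.snd) fun θ => by
      rw [← fst_add_snd_splitFourier hc, h]; simp
  have hminus : (fun n => (c n).1 - (c n).2) = 0 :=
    eq_zero_of_finsum_mul_exp_eq_zero (hc.fst.fun_sub hc.snd) fun θ => by
      simpa [h] using (fst_sub_snd_splitFourier hc (-θ)).symm
  funext n
  have h₁ := congrFun hplus n
  have h₂ := congrFun hminus n
  simp only [Pi.zero_apply] at h₁ h₂
  exact Prod.ext (show (c n).1 = 0 by linarith) (show (c n).2 = 0 by linarith)

end

/-- uniqueness of split-Fourier coefficients: if `c : ℤ → ℂ'` is finitely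
supported and `Σₙ cₙ e^{k'nθ} = 0` for all `θ`, then `c ≡ 0`; consequently two finite
split-Fourier expansions agreeing for all `θ` have identical coefficients. -/
theorem splitFourier_coeff_unique (c c' : ℤ → SC)
    (hc : (Function.support c).Finite) (hc' : (Function.support c').Finite) :
    ((∀ θ : ℝ, ∑ᶠ n : ℤ, SC.mul' (c n) (sexpZ n θ) = 0) → ∀ n : ℤ, c n = 0) ∧
    ((∀ θ : ℝ, ∑ᶠ n : ℤ, SC.mul' (c n) (sexpZ n θ) = ∑ᶠ n : ℤ, SC.mul' (c' n) (sexpZ n θ)) →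
      c = c') := by
  refine ⟨fun h => congrFun (eq_zero_of_splitFourier_eq_zero hc h), fun h => ?_⟩
  refine sub_eq_zero.mp <|
    eq_zero_of_splitFourier_eq_zero (HasFiniteSupport.sub hc hc') fun θ => ?_
  rw [splitFourier_sub hc hc', sub_eq_zero]
  exact h θ
end
end

section
/- Interpolation of a split-Fourier curve to another split-Fourier curve by a timelike minimal surface: let c, d, l, m : ℤ → ℂ' be finitely supported with c₀ = d₀ = l₀ = m₀ = 0, suppose Σ d_n e^{k'nθ} and Σ m_n e^{k'nθ} are real-valued for all θ, and let γ(θ) = (Σ_{n∈ℤ} c_n e^{k'nθ}, Σ_{n∈ℤ} d_n e^{k'nθ}) and α(θ) = (Σ_{n∈ℤ} l_n e^{k'nθ}, Σ_{n∈ℤ} m_n e^{k'nθ}) be the corresponding split-Fourier curves in 𝕃³ (identifying 𝕃³ with ℂ' × ℝ). Assume γ is spacelike or timelike, i.e. ⟨γ'(θ), γ'(θ)⟩ ≠ 0 for all θ ∈ ℝ. For r > 1 and n ≠ 0 set a_n(r) = (r^n c_n − l_n)/(r^{2n} − 1) and f_n(r) = (r^n d_n − m_n)/(r^{2n} − 1).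 Suppose there exists r > 1 such that: (i) for every integer m ≠ 0, Σ_{n≠0, n≠m} 4n(n−m) · a_n(r) · (conj(a_{n−m}(r)) − conj(l_{n−m})) − Σ_{i+j=m, i≠0, j≠0} 4 i j · f_i(r) · f_j(r) = 0, and (ii) Σ_{n≠0} 4n² ( a_n(r) · (conj(a_n(r)) − conj(l_n)) + f_n(r) · f_{−n}(r) ) = 0. Then there exist r₀, R₀ with r₀ < 1 and r² < R₀ and a generalized timelike minimal surface X on the hyperbolic annulus A(r₀, R₀) = {x+k'y ∈ ℂ' : x > 0, r₀ < x²−y² < R₀} such that X(e^{k'θ}) = α(θ) and X(r e^{k'θ}) = γ(θ) for all θ ∈ ℝ. -/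
noncomputable section

/-- The split exponential `e^{k'θ} = cosh θ + k' sinh θ`. -/
def sexp (θ : ℝ) : SC := (Real.cosh θ, Real.sinh θ)

/-- The hyperbolic annulus `A(r,R) = {x + k'y : x > 0, r < x² - y² < R}`. -/
def Ann (r R : ℝ) : Set SC := {z | 0 < z.1 ∧ r < z.1 ^ 2 - z.2 ^ 2 ∧ z.1 ^ 2 - z.2 ^ 2 < R}

/-- The coefficients `aₙ(r) = (rⁿ cₙ - lₙ)/(r^{2n} - 1)` (also used for `fₙ(r)` with the
third-component coefficients). -/
def acoef (c l : ℤ → SC) (r : ℝ) (n : ℤ) : SC :=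
  (1 / (r ^ (2 * n) - 1)) • (r ^ n • c n - l n)

section SFIhelpers
open Finset

/-! ### One-variable Laurent sums -/

def lsum (T : Finset ℤ) (A : ℤ → ℝ) (x : ℝ) : ℝ := ∑ n ∈ T, A n * x ^ n
def dlsum (T : Finset ℤ) (A : ℤ → ℝ) (x : ℝ) : ℝ := ∑ n ∈ T, A n * n * x ^ (n - 1)
def ddlsum (T : Finset ℤ) (A : ℤ → ℝ) (x : ℝ) : ℝ := ∑ n ∈ T, A n * n * (n - 1) * x ^ (n - 2)

lemma hasDerivAt_lsum (T : Finset ℤ) (A : ℤ → ℝ) {x : ℝ} (hx : x ≠ 0) :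
    HasDerivAt (lsum T A) (dlsum T A x) x := by
  have h : HasDerivAt (fun y => ∑ n ∈ T, A n * y ^ n)
      (∑ n ∈ T, A n * ((n : ℝ) * x ^ (n - 1))) x :=
    HasDerivAt.fun_sum fun n _ => (hasDerivAt_zpow n x (Or.inl hx)).const_mul (A n)
  have e : dlsum T A x = ∑ n ∈ T, A n * ((n : ℝ) * x ^ (n - 1)) :=
    Finset.sum_congr rfl fun n _ => by ring
  rw [e]; exact h

lemma hasDerivAt_dlsum (T : Finset ℤ) (A : ℤ → ℝ) {x : ℝ} (hx : x ≠ 0) :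
    HasDerivAt (fun y => dlsum T A y) (ddlsum T A x) x := by
  have h : HasDerivAt (fun y => ∑ n ∈ T, A n * n * y ^ (n - 1))
      (∑ n ∈ T, A n * n * (((n : ℝ) - 1) * x ^ (n - 1 - 1))) x :=
    HasDerivAt.fun_sum fun n _ => by
      have := (hasDerivAt_zpow (n - 1) x (Or.inl hx)).const_mul (A n * n)
      simpa using this
  have e : ddlsum T A x = ∑ n ∈ T, A n * n * (((n : ℝ) - 1) * x ^ (n - 1 - 1)) :=
    Finset.sum_congr rfl fun n _ => by
      have : n - 1 - 1 = n - 2 := by ring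
      rw [this]; ring
  rw [e]; exact h

lemma contDiffAt_zpow' (m : ℤ) {x : ℝ} (hx : x ≠ 0) :
    ContDiffAt ℝ (⊤ : ℕ∞) (fun y : ℝ => y ^ m) x := by
  rcases le_or_gt 0 m with h | h
  · lift m to ℕ using h
    have : (fun y : ℝ => y ^ (m : ℤ)) = fun y : ℝ => y ^ m := by
      funext y; exact zpow_natCast y m
    rw [this]; exact (contDiff_id.pow m).contDiffAt
  · have hpow : ContDiffAt ℝ (⊤ : ℕ∞) (fun y : ℝ => y ^ (-m).toNat) x := (contDiff_id.pow _).contDiffAt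
    have hx' : x ^ (-m).toNat ≠ 0 := pow_ne_zero _ hx
    have hinv : ContDiffAt ℝ (⊤ : ℕ∞) (fun z : ℝ => z⁻¹) (x ^ (-m).toNat) := contDiffAt_inv ℝ hx'
    have : (fun y : ℝ => y ^ m) = fun y : ℝ => (y ^ (-m).toNat)⁻¹ := by
      funext y
      rw [← zpow_natCast y, Int.toNat_of_nonneg (by omega : (0:ℤ) ≤ -m), zpow_neg]
      exact (inv_inv _).symm
    rw [this]
    exact hinv.comp x hpow

lemma contDiffAt_lsum (T : Finset ℤ) (A : ℤ → ℝ) {x : ℝ} (hx : x ≠ 0) :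
    ContDiffAt ℝ (⊤ : ℕ∞) (lsum T A) x := by
  have : ContDiffAt ℝ (⊤ : ℕ∞) (fun y => ∑ n ∈ T, A n * y ^ n) x :=
    ContDiffAt.sum fun n _ => ((contDiffAt_zpow' n hx).const_smul (A n) : _)
  exact this

/-! ### vanishing of Laurent polynomials on (0,∞) -/

lemma vanish (T : Finset ℤ) (A : ℤ → ℝ)
    (h : ∀ x : ℝ, 0 < x → ∑ n ∈ T, A n * x ^ n = 0) : ∀ n ∈ T, A n = 0 := by
  intro n hn
  have hTne : T.Nonempty := ⟨n, hn⟩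
  set N : ℤ := -(T.min' hTne) with hN
  have hnn : ∀ m ∈ T, 0 ≤ m + N := fun m hm => by
    have := T.min'_le m hm; omega
  set P : Polynomial ℝ := ∑ m ∈ T, Polynomial.C (A m) * Polynomial.X ^ (m + N).toNat with hP
  have hroots : ∀ x : ℝ, 0 < x → P.eval x = 0 := by
    intro x hx
    have hx0 : x ≠ 0 := ne_of_gt hx
    have e : P.eval x = x ^ N * ∑ m ∈ T, A m * x ^ m := by
      rw [hP, Polynomial.eval_finset_sum, Finset.mul_sum]
      refine Finset.sum_congr rfl fun m hm => ?_
      rw [Polynomial.eval_mul, Polynomial.eval_C, Polynomial.eval_pow, Polynomial.eval_X,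
        ← zpow_natCast x, Int.toNat_of_nonneg (hnn m hm), zpow_add₀ hx0]
      ring
    rw [e, h x hx, mul_zero]
  have hP0 : P = 0 := by
    apply Polynomial.eq_zero_of_infinite_isRoot
    exact (Set.Ioi_infinite (0:ℝ)).mono fun x hx => hroots x hx
  have hcoeff : P.coeff (n + N).toNat = A n := by
    rw [hP, Polynomial.finset_sum_coeff, Finset.sum_eq_single n]
    · simp [Polynomial.coeff_C_mul, Polynomial.coeff_X_pow]
    · intro m hm hmn
      have hne : (n + N).toNat ≠ (m + N).toNat := by
        have := hnn m hm; have := hnn n hn; omega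
      simp [Polynomial.coeff_C_mul, Polynomial.coeff_X_pow, hne]
    · intro h'; exact absurd hn h'
  rw [← hcoeff, hP0]; simp

/-! ### sum manipulation -/

lemma sum_neg_reindex {M : Type*} [AddCommMonoid M] (T : Finset ℤ)
    (hT : ∀ n ∈ T, -n ∈ T) (f : ℤ → M) : ∑ n ∈ T, f (-n) = ∑ n ∈ T, f n := by
  apply Finset.sum_nbij' (i := fun n => -n) (j := fun n => -n)
  · intro a ha; exact hT a ha
  · intro a ha; exact hT a ha
  · intro a _; simp
  · intro a _; simp
  · intro a _; rfl

lemma fiber_to_line (T : Finset ℤ) (m : ℤ) (G H : ℤ → ℝ)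
    (hH : ∀ i, i ∉ T → H i = 0) :
    ∑ p ∈ (T ×ˢ T).filter (fun p => p.1 + p.2 = m), G p.1 * H p.2
      = ∑ n ∈ T, G n * H (m - n) := by
  rw [show ∑ n ∈ T, G n * H (m - n)
      = ∑ n ∈ T.filter (fun n => m - n ∈ T), G n * H (m - n) by
    refine (Finset.sum_subset (Finset.filter_subset _ _) ?_).symm
    intro n hn hn'
    rw [hH (m - n) (by simp [Finset.mem_filter, hn] at hn'; exact hn'), mul_zero]]
  apply Finset.sum_nbij' (i := fun p => p.1) (j := fun n => (n, m - n))
  · intro p hp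
    simp only [Finset.mem_filter, Finset.mem_product] at hp ⊢
    refine ⟨hp.1.1, ?_⟩
    rw [show m - p.1 = p.2 by omega]
    exact hp.1.2
  · intro n hn
    simp only [Finset.mem_filter, Finset.mem_product] at hn ⊢
    exact ⟨⟨hn.1, hn.2⟩, by omega⟩
  · intro p hp
    simp only [Finset.mem_filter, Finset.mem_product] at hp
    ext
    · simp
    · simp; omega
  · intro n _; rfl
  · intro p hp
    simp only [Finset.mem_filter, Finset.mem_product] at hp
    have : m - p.1 = p.2 := by omega
    rw [this]

lemma fiber_to_line' (T : Finset ℤ) (m : ℤ) (G H : ℤ → ℝ)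
    (hG : ∀ i, i ∉ T → G i = 0) :
    ∑ p ∈ (T ×ˢ T).filter (fun p => p.1 + p.2 = m), G p.1 * H p.2
      = ∑ n ∈ T, G (m - n) * H n := by
  rw [show ∑ n ∈ T, G (m - n) * H n
      = ∑ n ∈ T.filter (fun n => m - n ∈ T), G (m - n) * H n by
    refine (Finset.sum_subset (Finset.filter_subset _ _) ?_).symm
    intro n hn hn'
    rw [hG (m - n) (by simp [Finset.mem_filter, hn] at hn'; exact hn'), zero_mul]]
  apply Finset.sum_nbij' (i := fun p => p.2) (j := fun n => (m - n, n))
  · intro p hp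
    simp only [Finset.mem_filter, Finset.mem_product] at hp ⊢
    refine ⟨hp.1.2, ?_⟩
    rw [show m - p.2 = p.1 by omega]
    exact hp.1.1
  · intro n hn
    simp only [Finset.mem_filter, Finset.mem_product] at hn ⊢
    exact ⟨⟨hn.2, hn.1⟩, by omega⟩
  · intro p hp
    simp only [Finset.mem_filter, Finset.mem_product] at hp
    ext
    · simp; omega
    · simp
  · intro n _; rfl
  · intro p hp
    simp only [Finset.mem_filter, Finset.mem_product] at hp
    have : m - p.2 = p.1 := by omega
    rw [this]

lemma line_swap (T : Finset ℤ) (m : ℤ) (G H : ℤ → ℝ)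
    (hG : ∀ i, i ∉ T → G i = 0) (hH : ∀ i, i ∉ T → H i = 0) :
    ∑ n ∈ T, G n * H (m - n) = ∑ n ∈ T, G (m - n) * H n := by
  rw [← fiber_to_line T m G H hH, fiber_to_line' T m G H hG]

lemma prod_expand (T : Finset ℤ) (G H : ℤ → ℝ) {x : ℝ} (hx : x ≠ 0) :
    (∑ i ∈ T, G i * x ^ (i - 1)) * (∑ j ∈ T, H j * x ^ (j - 1))
      = ∑ p ∈ T ×ˢ T, G p.1 * H p.2 * x ^ (p.1 + p.2 - 2) := by
  rw [Finset.sum_mul_sum, ← Finset.sum_product']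
  refine Finset.sum_congr rfl fun p _ => ?_
  rw [show p.1 + p.2 - 2 = (p.1 - 1) + (p.2 - 1) by ring, zpow_add₀ hx]
  ring

lemma conf_of_coeffs (T : Finset ℤ) (G H Φ : ℤ → ℝ)
    (hH : ∀ i, i ∉ T → H i = 0)
    (hΦ : ∀ i, i ∉ T → Φ i = 0)
    (hm : ∀ m : ℤ, ∑ n ∈ T, (G n * H (m - n) - Φ n * Φ (m - n)) = 0)
    {x : ℝ} (hx : x ≠ 0) :
    (∑ i ∈ T, G i * x ^ (i - 1)) * (∑ j ∈ T, H j * x ^ (j - 1))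
      = (∑ i ∈ T, Φ i * x ^ (i - 1)) ^ 2 := by
  rw [sq, prod_expand T G H hx, prod_expand T Φ Φ hx, ← sub_eq_zero, ← Finset.sum_sub_distrib]
  have e : ∀ p : ℤ × ℤ, G p.1 * H p.2 * x ^ (p.1 + p.2 - 2) - Φ p.1 * Φ p.2 * x ^ (p.1 + p.2 - 2)
      = (G p.1 * H p.2 - Φ p.1 * Φ p.2) * x ^ (p.1 + p.2 - 2) := fun p => by ring
  simp_rw [e]
  rw [← Finset.sum_fiberwise_of_maps_to (g := fun p : ℤ × ℤ => p.1 + p.2)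
    (t := (T ×ˢ T).image (fun p => p.1 + p.2)) (fun p hp => Finset.mem_image_of_mem _ hp)]
  apply Finset.sum_eq_zero
  intro m _
  have e2 : ∀ p ∈ (T ×ˢ T).filter (fun p => p.1 + p.2 = m),
      (G p.1 * H p.2 - Φ p.1 * Φ p.2) * x ^ (p.1 + p.2 - 2)
        = G p.1 * H p.2 * x ^ (m - 2) - Φ p.1 * Φ p.2 * x ^ (m - 2) := by
    intro p hp
    rw [Finset.mem_filter] at hp
    rw [hp.2]; ring
  rw [Finset.sum_congr rfl e2, Finset.sum_sub_distrib]
  have e3 : ∀ (K : ℤ → ℝ) (L : ℤ → ℝ), (∀ i, i ∉ T → L i = 0) →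
      ∑ p ∈ (T ×ˢ T).filter (fun p => p.1 + p.2 = m), K p.1 * L p.2 * x ^ (m - 2)
        = (∑ n ∈ T, K n * L (m - n)) * x ^ (m - 2) := by
    intro K L hL
    rw [← fiber_to_line T m K L hL, Finset.sum_mul]
  rw [e3 G H hH, e3 Φ Φ hΦ, ← sub_mul, ← Finset.sum_sub_distrib, hm m, zero_mul]

/-! ### plus/minus parts of split-complex numbers -/

def pp (w : SC) : ℝ := w.1 + w.2
def mm (w : SC) : ℝ := w.1 - w.2

lemma pp_mul' (z w : SC) : pp (SC.mul' z w) = pp z * pp w := by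
  simp [pp, SC.mul']; ring
lemma mm_mul' (z w : SC) : mm (SC.mul' z w) = mm z * mm w := by
  simp [mm, SC.mul']; ring
lemma pp_conj' (z : SC) : pp (SC.conj' z) = mm z := by simp [pp, mm, SC.conj']; ring
lemma mm_conj' (z : SC) : mm (SC.conj' z) = pp z := by simp [pp, mm, SC.conj']
lemma pp_smul (x : ℝ) (z : SC) : pp (x • z) = x * pp z := by
  simp [pp, Prod.smul_fst, Prod.smul_snd]; ring
lemma mm_smul (x : ℝ) (z : SC) : mm (x • z) = x * mm z := by
  simp [mm, Prod.smul_fst, Prod.smul_snd]; ring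
lemma pp_add (z w : SC) : pp (z + w) = pp z + pp w := by simp [pp]; ring
lemma mm_add (z w : SC) : mm (z + w) = mm z + mm w := by simp [mm]; ring
lemma pp_sub (z w : SC) : pp (z - w) = pp z - pp w := by simp [pp]; ring
lemma mm_sub (z w : SC) : mm (z - w) = mm z - mm w := by simp [mm]; ring
lemma pp_zero : pp (0 : SC) = 0 := by simp [pp]
lemma mm_zero : mm (0 : SC) = 0 := by simp [mm]
lemma pp_sum {T : Finset ℤ} (f : ℤ → SC) : pp (∑ n ∈ T, f n) = ∑ n ∈ T, pp (f n) := by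
  unfold pp; rw [Prod.fst_sum, Prod.snd_sum, ← Finset.sum_add_distrib]
lemma mm_sum {T : Finset ℤ} (f : ℤ → SC) : mm (∑ n ∈ T, f n) = ∑ n ∈ T, mm (f n) := by
  unfold mm; rw [Prod.fst_sum, Prod.snd_sum, ← Finset.sum_sub_distrib]

lemma exp_zpow (θ : ℝ) (n : ℤ) : Real.exp θ ^ n = Real.exp (n * θ) := by
  rcases n with n | n
  · rw [Int.ofNat_eq_coe, zpow_natCast, ← Real.exp_nat_mul]; norm_num
  · rw [zpow_negSucc, ← Real.exp_nat_mul, ← Real.exp_neg]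
    congr 1
    push_cast
    ring

lemma key1 (x y s : ℝ) (hs : s ≠ 0) (hs2 : s ^ 2 ≠ 1) :
    ((s * x - y) / (s ^ 2 - 1)) * s + (y - (s * x - y) / (s ^ 2 - 1)) * s⁻¹ = x := by
  have h1 : s ^ 2 - 1 ≠ 0 := sub_ne_zero.mpr hs2
  field_simp
  ring

lemma key2 (x y s : ℝ) (hs : s ≠ 0) (hs2 : s ^ 2 ≠ 1) :
    y - (s⁻¹ * x - y) / ((s⁻¹) ^ 2 - 1) = (s * x - y) / (s ^ 2 - 1) := by
  have h1 : s ^ 2 - 1 ≠ 0 := sub_ne_zero.mpr hs2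
  have h3 : 1 - s ^ 2 ≠ 0 := fun h => h1 (by linarith)
  have e : (s⁻¹) ^ 2 - 1 = (1 - s ^ 2) / s ^ 2 := by
    field_simp
  rw [e]
  have hs2' : (s:ℝ) ^ 2 ≠ 0 := pow_ne_zero _ hs
  field_simp
  ring

/-! ### the surface and its derivatives -/

def Ulm : SC →L[ℝ] ℝ := ContinuousLinearMap.fst ℝ ℝ ℝ + ContinuousLinearMap.snd ℝ ℝ ℝ
def Vlm : SC →L[ℝ] ℝ := ContinuousLinearMap.fst ℝ ℝ ℝ - ContinuousLinearMap.snd ℝ ℝ ℝ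
@[simp] lemma Ulm_apply (p : SC) : Ulm p = p.1 + p.2 := rfl
@[simp] lemma Vlm_apply (p : SC) : Vlm p = p.1 - p.2 := rfl
lemma hasFDerivAt_U (p : SC) : HasFDerivAt (fun q : SC => q.1 + q.2) Ulm p :=
  (hasFDerivAt_fst (p := p)).add (hasFDerivAt_snd (p := p))
lemma hasFDerivAt_V (p : SC) : HasFDerivAt (fun q : SC => q.1 - q.2) Vlm p :=
  (hasFDerivAt_fst (p := p)).sub (hasFDerivAt_snd (p := p))
lemma hasFDerivAt_comb {f g : ℝ → ℝ} {f' g' : ℝ} {p : SC}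
    (hf : HasDerivAt f f' (p.1 + p.2)) (hg : HasDerivAt g g' (p.1 - p.2)) :
    HasFDerivAt (fun q : SC => f (q.1 + q.2) + g (q.1 - q.2)) (f' • Ulm + g' • Vlm) p :=
  (hf.comp_hasFDerivAt p (hasFDerivAt_U p)).add (hg.comp_hasFDerivAt p (hasFDerivAt_V p))
@[simp] lemma comb_apply_x (a b : ℝ) : (a • Ulm + b • Vlm) ((1 : ℝ), (0 : ℝ)) = a + b := by
  simp [Ulm, Vlm]
@[simp] lemma comb_apply_y (a b : ℝ) : (a • Ulm + b • Vlm) ((0 : ℝ), (1 : ℝ)) = a - b := by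
  simp [Ulm, Vlm]; ring

def XX (T : Finset ℤ) (A1 B1 A2 B2 A3 B3 : ℤ → ℝ) (p : SC) : L3 :=
  (lsum T A1 (p.1 + p.2) + lsum T B1 (p.1 - p.2),
   lsum T A2 (p.1 + p.2) + lsum T B2 (p.1 - p.2),
   lsum T A3 (p.1 + p.2) + lsum T B3 (p.1 - p.2))

def DXP (T : Finset ℤ) (A1 B1 A2 B2 A3 B3 : ℤ → ℝ) (p : SC) : L3 :=
  (dlsum T A1 (p.1 + p.2) + dlsum T B1 (p.1 - p.2),
   dlsum T A2 (p.1 + p.2) + dlsum T B2 (p.1 - p.2),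
   dlsum T A3 (p.1 + p.2) + dlsum T B3 (p.1 - p.2))

def DXM (T : Finset ℤ) (A1 B1 A2 B2 A3 B3 : ℤ → ℝ) (p : SC) : L3 :=
  (dlsum T A1 (p.1 + p.2) - dlsum T B1 (p.1 - p.2),
   dlsum T A2 (p.1 + p.2) - dlsum T B2 (p.1 - p.2),
   dlsum T A3 (p.1 + p.2) - dlsum T B3 (p.1 - p.2))

def DDX (T : Finset ℤ) (A1 B1 A2 B2 A3 B3 : ℤ → ℝ) (p : SC) : L3 :=
  (ddlsum T A1 (p.1 + p.2) + ddlsum T B1 (p.1 - p.2),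
   ddlsum T A2 (p.1 + p.2) + ddlsum T B2 (p.1 - p.2),
   ddlsum T A3 (p.1 + p.2) + ddlsum T B3 (p.1 - p.2))

variable (T : Finset ℤ) (A1 B1 A2 B2 A3 B3 : ℤ → ℝ)

lemma hasFDerivAt_scalar (A B : ℤ → ℝ) {p : SC} (hu : p.1 + p.2 ≠ 0) (hv : p.1 - p.2 ≠ 0) :
    HasFDerivAt (fun q : SC => lsum T A (q.1 + q.2) + lsum T B (q.1 - q.2))
      (dlsum T A (p.1 + p.2) • Ulm + dlsum T B (p.1 - p.2) • Vlm) p :=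
  hasFDerivAt_comb (hasDerivAt_lsum T A hu) (hasDerivAt_lsum T B hv)

lemma hasFDerivAt_XX {p : SC} (hu : p.1 + p.2 ≠ 0) (hv : p.1 - p.2 ≠ 0) :
    HasFDerivAt (XX T A1 B1 A2 B2 A3 B3)
      ((dlsum T A1 (p.1 + p.2) • Ulm + dlsum T B1 (p.1 - p.2) • Vlm).prod
        ((dlsum T A2 (p.1 + p.2) • Ulm + dlsum T B2 (p.1 - p.2) • Vlm).prod
          (dlsum T A3 (p.1 + p.2) • Ulm + dlsum T B3 (p.1 - p.2) • Vlm))) p :=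
  ((hasFDerivAt_scalar T A1 B1 hu hv).prodMk
    ((hasFDerivAt_scalar T A2 B2 hu hv).prodMk (hasFDerivAt_scalar T A3 B3 hu hv)))

lemma pdx_XX {p : SC} (hu : p.1 + p.2 ≠ 0) (hv : p.1 - p.2 ≠ 0) :
    pdx (XX T A1 B1 A2 B2 A3 B3) p = DXP T A1 B1 A2 B2 A3 B3 p := by
  rw [pdx, (hasFDerivAt_XX T A1 B1 A2 B2 A3 B3 hu hv).fderiv]
  simp [DXP, ContinuousLinearMap.prod_apply]

lemma pdy_XX {p : SC} (hu : p.1 + p.2 ≠ 0) (hv : p.1 - p.2 ≠ 0) :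
    pdy (XX T A1 B1 A2 B2 A3 B3) p = DXM T A1 B1 A2 B2 A3 B3 p := by
  rw [pdy, (hasFDerivAt_XX T A1 B1 A2 B2 A3 B3 hu hv).fderiv]
  simp [DXM, ContinuousLinearMap.prod_apply, sub_eq_add_neg]

lemma pdx_scalar (A B : ℤ → ℝ) {p : SC} (hu : p.1 + p.2 ≠ 0) (hv : p.1 - p.2 ≠ 0) :
    pdx (fun q : SC => lsum T A (q.1 + q.2) + lsum T B (q.1 - q.2)) p
      = dlsum T A (p.1 + p.2) + dlsum T B (p.1 - p.2) := by
  rw [pdx, (hasFDerivAt_scalar T A B hu hv).fderiv]; simp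

lemma pdy_scalar (A B : ℤ → ℝ) {p : SC} (hu : p.1 + p.2 ≠ 0) (hv : p.1 - p.2 ≠ 0) :
    pdy (fun q : SC => lsum T A (q.1 + q.2) + lsum T B (q.1 - q.2)) p
      = dlsum T A (p.1 + p.2) - dlsum T B (p.1 - p.2) := by
  rw [pdy, (hasFDerivAt_scalar T A B hu hv).fderiv]; simp [sub_eq_add_neg]

def Om : Set SC := {p : SC | 0 < p.1 + p.2 ∧ 0 < p.1 - p.2}

lemma isOpen_Om : IsOpen Om := by
  have h1 : Continuous fun p : SC => p.1 + p.2 := continuous_fst.add continuous_snd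
  have h2 : Continuous fun p : SC => p.1 - p.2 := continuous_fst.sub continuous_snd
  exact (isOpen_Ioi.preimage h1).inter (isOpen_Ioi.preimage h2)

lemma mem_Om_ne {p : SC} (hp : p ∈ Om) : p.1 + p.2 ≠ 0 ∧ p.1 - p.2 ≠ 0 :=
  ⟨ne_of_gt hp.1, ne_of_gt hp.2⟩

lemma hasFDerivAt_DXP {p : SC} (hu : p.1 + p.2 ≠ 0) (hv : p.1 - p.2 ≠ 0) :
    HasFDerivAt (DXP T A1 B1 A2 B2 A3 B3)
      ((ddlsum T A1 (p.1 + p.2) • Ulm + ddlsum T B1 (p.1 - p.2) • Vlm).prod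
        ((ddlsum T A2 (p.1 + p.2) • Ulm + ddlsum T B2 (p.1 - p.2) • Vlm).prod
          (ddlsum T A3 (p.1 + p.2) • Ulm + ddlsum T B3 (p.1 - p.2) • Vlm))) p := by
  refine HasFDerivAt.prodMk ?_ (HasFDerivAt.prodMk ?_ ?_) <;>
    exact hasFDerivAt_comb (hasDerivAt_dlsum T _ hu) (hasDerivAt_dlsum T _ hv)

lemma hasFDerivAt_DXM {p : SC} (hu : p.1 + p.2 ≠ 0) (hv : p.1 - p.2 ≠ 0) :
    HasFDerivAt (DXM T A1 B1 A2 B2 A3 B3)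
      ((ddlsum T A1 (p.1 + p.2) • Ulm - ddlsum T B1 (p.1 - p.2) • Vlm).prod
        ((ddlsum T A2 (p.1 + p.2) • Ulm - ddlsum T B2 (p.1 - p.2) • Vlm).prod
          (ddlsum T A3 (p.1 + p.2) • Ulm - ddlsum T B3 (p.1 - p.2) • Vlm))) p := by
  refine HasFDerivAt.prodMk ?_ (HasFDerivAt.prodMk ?_ ?_) <;>
    exact ((hasDerivAt_dlsum T _ hu).comp_hasFDerivAt p (hasFDerivAt_U p)).sub
      ((hasDerivAt_dlsum T _ hv).comp_hasFDerivAt p (hasFDerivAt_V p))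

lemma pdxpdx_XX {p : SC} (hp : p ∈ Om) :
    pdx (pdx (XX T A1 B1 A2 B2 A3 B3)) p = DDX T A1 B1 A2 B2 A3 B3 p := by
  obtain ⟨hu, hv⟩ := mem_Om_ne hp
  have hev : pdx (XX T A1 B1 A2 B2 A3 B3) =ᶠ[nhds p] DXP T A1 B1 A2 B2 A3 B3 := by
    filter_upwards [isOpen_Om.mem_nhds hp] with q hq
    exact pdx_XX T A1 B1 A2 B2 A3 B3 (mem_Om_ne hq).1 (mem_Om_ne hq).2
  rw [pdx, hev.fderiv_eq, (hasFDerivAt_DXP T A1 B1 A2 B2 A3 B3 hu hv).fderiv]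
  simp [DDX, ContinuousLinearMap.prod_apply]

lemma pdypdy_XX {p : SC} (hp : p ∈ Om) :
    pdy (pdy (XX T A1 B1 A2 B2 A3 B3)) p = DDX T A1 B1 A2 B2 A3 B3 p := by
  obtain ⟨hu, hv⟩ := mem_Om_ne hp
  have hev : pdy (XX T A1 B1 A2 B2 A3 B3) =ᶠ[nhds p] DXM T A1 B1 A2 B2 A3 B3 := by
    filter_upwards [isOpen_Om.mem_nhds hp] with q hq
    exact pdy_XX T A1 B1 A2 B2 A3 B3 (mem_Om_ne hq).1 (mem_Om_ne hq).2
  rw [pdy, hev.fderiv_eq, (hasFDerivAt_DXM T A1 B1 A2 B2 A3 B3 hu hv).fderiv]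
  have e1 : ∀ a b : ℝ, (a • Ulm - b • Vlm) ((0:ℝ), (1:ℝ)) = a + b := by
    intro a b; simp [Ulm, Vlm]
  simp [DDX, ContinuousLinearMap.prod_apply, e1]

lemma contDiffAt_XX {p : SC} (hu : p.1 + p.2 ≠ 0) (hv : p.1 - p.2 ≠ 0) :
    ContDiffAt ℝ (⊤ : ℕ∞) (XX T A1 B1 A2 B2 A3 B3) p := by
  have hU : ContDiffAt ℝ (⊤ : ℕ∞) (fun q : SC => q.1 + q.2) p :=
    (contDiff_fst.add contDiff_snd).contDiffAt
  have hV : ContDiffAt ℝ (⊤ : ℕ∞) (fun q : SC => q.1 - q.2) p :=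
    (contDiff_fst.sub contDiff_snd).contDiffAt
  have hsc : ∀ A B : ℤ → ℝ,
      ContDiffAt ℝ (⊤ : ℕ∞) (fun q : SC => lsum T A (q.1 + q.2) + lsum T B (q.1 - q.2)) p := by
    intro A B
    exact ((contDiffAt_lsum T A hu).comp p hU).add ((contDiffAt_lsum T B hv).comp p hV)
  exact (hsc A1 B1).prodMk ((hsc A2 B2).prodMk (hsc A3 B3))

/-! ### evaluation along the boundary curves -/

lemma eval_boundary (hTneg : ∀ n ∈ T, -n ∈ T) (A B w : ℤ → ℝ) {ρ : ℝ} (hρ : 0 < ρ)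
    (hcoef : ∀ n ∈ T, A n * ρ ^ n + B (-n) * ρ ^ (-n) = w n) (θ : ℝ) :
    lsum T A (ρ * Real.exp θ) + lsum T B (ρ * Real.exp (-θ))
      = ∑ n ∈ T, w n * Real.exp (n * θ) := by
  have hρ0 : ρ ≠ 0 := ne_of_gt hρ
  have e1 : lsum T A (ρ * Real.exp θ) = ∑ n ∈ T, A n * ρ ^ n * Real.exp (n * θ) := by
    unfold lsum
    refine Finset.sum_congr rfl fun n _ => ?_
    rw [mul_zpow, exp_zpow]
    ring
  have e2 : lsum T B (ρ * Real.exp (-θ)) = ∑ n ∈ T, B (-n) * ρ ^ (-n) * Real.exp (n * θ) := by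
    unfold lsum
    rw [← sum_neg_reindex T hTneg (fun n => B (-n) * ρ ^ (-n) * Real.exp (n * θ))]
    refine Finset.sum_congr rfl fun n _ => ?_
    rw [mul_zpow, exp_zpow, neg_neg]
    have : ((-n : ℤ) : ℝ) * θ = (n : ℝ) * -θ := by push_cast; ring
    rw [this]
    ring
  rw [e1, e2, ← Finset.sum_add_distrib]
  refine Finset.sum_congr rfl fun n hn => ?_
  rw [← hcoef n hn]
  ring

lemma fourier_fst (hTneg : ∀ n ∈ T, -n ∈ T) (w : ℤ → SC)
    (hsupp : ∀ n, n ∉ T → w n = 0) (θ : ℝ) :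
    (∑ᶠ n : ℤ, SC.mul' (w n) (sexpZ n θ)).1
      = ∑ n ∈ T, (pp (w n) + mm (w (-n))) / 2 * Real.exp (n * θ) := by
  have hsub : (Function.support fun n => SC.mul' (w n) (sexpZ n θ)) ⊆ (T : Set ℤ) := by
    intro n hn
    by_contra hnT
    have : w n = 0 := hsupp n hnT
    apply hn
    simp [this, SC.mul', Prod.ext_iff]
  rw [finsum_eq_sum_of_support_subset _ hsub, Prod.fst_sum]
  have e1 : ∀ n : ℤ, (SC.mul' (w n) (sexpZ n θ)).1
      = pp (w n) / 2 * Real.exp (n * θ) + mm (w n) / 2 * Real.exp (-(n * θ)) := by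
    intro n
    show (w n).1 * Real.cosh (n * θ) + (w n).2 * Real.sinh (n * θ) = _
    rw [Real.cosh_eq, Real.sinh_eq, pp, mm]
    ring
  rw [Finset.sum_congr rfl fun n _ => e1 n, Finset.sum_add_distrib]
  have e2 : ∑ n ∈ T, mm (w n) / 2 * Real.exp (-(n * θ))
      = ∑ n ∈ T, mm (w (-n)) / 2 * Real.exp (n * θ) := by
    rw [← sum_neg_reindex T hTneg (fun n => mm (w (-n)) / 2 * Real.exp (n * θ))]
    refine Finset.sum_congr rfl fun n _ => ?_
    rw [neg_neg]
    have : ((-n : ℤ) : ℝ) * θ = -((n : ℝ) * θ) := by push_cast; ring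
    rw [this]
  rw [e2, ← Finset.sum_add_distrib]
  refine Finset.sum_congr rfl fun n _ => by ring

lemma fourier_snd (hTneg : ∀ n ∈ T, -n ∈ T) (w : ℤ → SC)
    (hsupp : ∀ n, n ∉ T → w n = 0) (θ : ℝ) :
    (∑ᶠ n : ℤ, SC.mul' (w n) (sexpZ n θ)).2
      = ∑ n ∈ T, (pp (w n) - mm (w (-n))) / 2 * Real.exp (n * θ) := by
  have hsub : (Function.support fun n => SC.mul' (w n) (sexpZ n θ)) ⊆ (T : Set ℤ) := by
    intro n hn
    by_contra hnT
    have : w n = 0 := hsupp n hnT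
    apply hn
    simp [this, SC.mul', Prod.ext_iff]
  rw [finsum_eq_sum_of_support_subset _ hsub, Prod.snd_sum]
  have e1 : ∀ n : ℤ, (SC.mul' (w n) (sexpZ n θ)).2
      = pp (w n) / 2 * Real.exp (n * θ) - mm (w n) / 2 * Real.exp (-(n * θ)) := by
    intro n
    show (w n).1 * Real.sinh (n * θ) + (w n).2 * Real.cosh (n * θ) = _
    rw [Real.cosh_eq, Real.sinh_eq, pp, mm]
    ring
  rw [Finset.sum_congr rfl fun n _ => e1 n, Finset.sum_sub_distrib]
  have e2 : ∑ n ∈ T, mm (w n) / 2 * Real.exp (-(n * θ))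
      = ∑ n ∈ T, mm (w (-n)) / 2 * Real.exp (n * θ) := by
    rw [← sum_neg_reindex T hTneg (fun n => mm (w (-n)) / 2 * Real.exp (n * θ))]
    refine Finset.sum_congr rfl fun n _ => ?_
    rw [neg_neg]
    have : ((-n : ℤ) : ℝ) * θ = -((n : ℝ) * θ) := by push_cast; ring
    rw [this]
  rw [e2, ← Finset.sum_sub_distrib]
  refine Finset.sum_congr rfl fun n _ => by ring

lemma hasDerivAt_boundary (A B : ℤ → ℝ) {ρ : ℝ} (hρ : ρ ≠ 0) :
    HasDerivAt (fun θ : ℝ => lsum T A (ρ * Real.exp θ) + lsum T B (ρ * Real.exp (-θ)))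
      (dlsum T A ρ * ρ - dlsum T B ρ * ρ) 0 := by
  have h1 : HasDerivAt (fun θ : ℝ => ρ * Real.exp θ) (ρ * 1) 0 := by
    simpa using (Real.hasDerivAt_exp 0).const_mul ρ
  have h2 : HasDerivAt (fun θ : ℝ => ρ * Real.exp (-θ)) (ρ * (-1)) 0 := by
    have hneg : HasDerivAt (fun θ : ℝ => -θ) (-1) 0 := (hasDerivAt_id 0).neg
    have hexp : HasDerivAt Real.exp (Real.exp (-(0:ℝ))) (-(0:ℝ)) := Real.hasDerivAt_exp _
    have := (hexp.comp 0 hneg).const_mul ρ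
    simpa using this
  have hA : HasDerivAt (lsum T A) (dlsum T A ρ) ((fun θ : ℝ => ρ * Real.exp θ) 0) := by
    simpa using hasDerivAt_lsum T A hρ
  have hB : HasDerivAt (lsum T B) (dlsum T B ρ) ((fun θ : ℝ => ρ * Real.exp (-θ)) 0) := by
    simpa using hasDerivAt_lsum T B hρ
  have := (hA.comp 0 h1).add (hB.comp 0 h2)
  have h3 : HasDerivAt (fun θ : ℝ => lsum T A (ρ * Real.exp θ) + lsum T B (ρ * Real.exp (-θ))) _ 0 :=
    this
  convert h3 using 1
  ring

def CA (w z : ℤ → SC) (r : ℝ) (n : ℤ) : ℝ :=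
  (pp (acoef w z r n) + mm (z (-n)) - mm (acoef w z r (-n))) / 2
def CB (w z : ℤ → SC) (r : ℝ) (n : ℤ) : ℝ :=
  (mm (acoef w z r n) + pp (z (-n)) - pp (acoef w z r (-n))) / 2
def CA2 (w z : ℤ → SC) (r : ℝ) (n : ℤ) : ℝ :=
  (pp (acoef w z r n) - mm (z (-n)) + mm (acoef w z r (-n))) / 2
def CB2 (w z : ℤ → SC) (r : ℝ) (n : ℤ) : ℝ :=
  (- mm (acoef w z r n) + pp (z (-n)) - pp (acoef w z r (-n))) / 2

end SFIhelpers


/-- interpolating a split-Fourier curve to another split-Fourier curve by a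
timelike minimal surface: given split-Fourier curves `γ = (Σ cₙ e^{k'nθ}, Σ dₙ e^{k'nθ})`
(spacelike or timelike) and `α = (Σ lₙ e^{k'nθ}, Σ eₙ e^{k'nθ})` (real third components),
and `r > 1` such that `aₙ(r), fₙ(r)` satisfy the two coefficient conditions, there is a
generalized timelike minimal surface `X` on a hyperbolic annulus with `X(e^{k'θ}) = α(θ)` and
`X(r e^{k'θ}) = γ(θ)`. -/
theorem splitFourier_interpolate_to_curve (c d l e : ℤ → SC)
    (hcfin : (Function.support c).Finite) (hdfin : (Function.support d).Finite)
    (hlfin : (Function.support l).Finite) (hefin : (Function.support e).Finite)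
    (hc0 : c 0 = 0) (hd0 : d 0 = 0) (hl0 : l 0 = 0) (he0 : e 0 = 0)
    (hdreal : ∀ θ : ℝ, (∑ᶠ n : ℤ, SC.mul' (d n) (sexpZ n θ)).2 = 0)
    (hereal : ∀ θ : ℝ, (∑ᶠ n : ℤ, SC.mul' (e n) (sexpZ n θ)).2 = 0)
    (γ α : ℝ → L3)
    (hγ : ∀ θ : ℝ, γ θ = ((∑ᶠ n : ℤ, SC.mul' (c n) (sexpZ n θ)).1,
        (∑ᶠ n : ℤ, SC.mul' (c n) (sexpZ n θ)).2,
        (∑ᶠ n : ℤ, SC.mul' (d n) (sexpZ n θ)).1))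
    (hα : ∀ θ : ℝ, α θ = ((∑ᶠ n : ℤ, SC.mul' (l n) (sexpZ n θ)).1,
        (∑ᶠ n : ℤ, SC.mul' (l n) (sexpZ n θ)).2,
        (∑ᶠ n : ℤ, SC.mul' (e n) (sexpZ n θ)).1))
    (hcausal : ∀ θ : ℝ, ldot (deriv γ θ) (deriv γ θ) ≠ 0)
    (r : ℝ) (hr : 1 < r)
    (hcond1 : ∀ m : ℤ, m ≠ 0 →
      (∑ᶠ (n : ℤ) (_ : n ≠ 0 ∧ n ≠ m),
          (4 * (n : ℝ) * ((n : ℝ) - (m : ℝ))) •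
            SC.mul' (acoef c l r n)
              (SC.conj' (acoef c l r (n - m)) - SC.conj' (l (n - m)))) -
        (∑ᶠ (i : ℤ) (_ : i ≠ 0 ∧ m - i ≠ 0),
          (4 * (i : ℝ) * ((m : ℝ) - (i : ℝ))) •
            SC.mul' (acoef d e r i) (acoef d e r (m - i))) = 0)
    (hcond2 : ∑ᶠ (n : ℤ) (_ : n ≠ 0),
        (4 * (n : ℝ) ^ 2) •
          (SC.mul' (acoef c l r n) (SC.conj' (acoef c l r n) - SC.conj' (l n)) +
            SC.mul' (acoef d e r n) (acoef d e r (-n))) = 0) :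
    ∃ r₀ R₀ : ℝ, r₀ < 1 ∧ r ^ 2 < R₀ ∧ ∃ X : SC → L3,
      ContDiffOn ℝ (⊤ : ℕ∞) X (Ann r₀ R₀) ∧ IsGTM (Ann r₀ R₀) X ∧
      (∀ θ : ℝ, X (sexp θ) = α θ) ∧
      (∀ θ : ℝ, X (r • sexp θ) = γ θ) := by
  classical
  obtain ⟨T, hTneg, hTsupp, hTne0⟩ :
      ∃ T : Finset ℤ, (∀ n ∈ T, -n ∈ T) ∧
        (∀ n : ℤ, n ∉ T → c n = 0 ∧ d n = 0 ∧ l n = 0 ∧ e n = 0) ∧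
        (∀ n ∈ T, n ≠ 0) := by
    set S : Finset ℤ :=
      ((hcfin.toFinset ∪ hdfin.toFinset) ∪ (hlfin.toFinset ∪ hefin.toFinset)) with hS
    have hSmem : ∀ n : ℤ, n ∈ S ↔ (c n ≠ 0 ∨ d n ≠ 0 ∨ l n ≠ 0 ∨ e n ≠ 0) := by
      intro n
      simp [hS, Finset.mem_union, Set.Finite.mem_toFinset, Function.mem_support, or_assoc]
    refine ⟨S ∪ S.image (fun n => -n), ?_, ?_, ?_⟩
    · intro n hn
      rcases Finset.mem_union.mp hn with h | h
      · exact Finset.mem_union_right _ (Finset.mem_image_of_mem _ h)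
      · obtain ⟨m, hm, hmn⟩ := Finset.mem_image.mp h
        exact Finset.mem_union_left _ (by rw [← hmn, neg_neg]; exact hm)
    · intro n hn
      have hnS : n ∉ S := fun h => hn (Finset.mem_union_left _ h)
      have := (hSmem n).not.mp hnS
      push_neg at this
      exact ⟨this.1, this.2.1, this.2.2.1, this.2.2.2⟩
    · intro n hn hn0
      subst hn0
      rcases Finset.mem_union.mp hn with h | h
      · rcases (hSmem 0).mp h with h' | h' | h' | h' <;> [exact h' hc0; exact h' hd0;
          exact h' hl0; exact h' he0]
      · obtain ⟨m, hm, hmn⟩ := Finset.mem_image.mp h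
        have : m = 0 := by omega
        subst this
        rcases (hSmem 0).mp hm with h' | h' | h' | h' <;> [exact h' hc0; exact h' hd0;
          exact h' hl0; exact h' he0]
  have hr0 : (0:ℝ) < r := lt_trans one_pos hr
  have hrne : r ≠ 0 := ne_of_gt hr0
  have hzne : ∀ n : ℤ, r ^ n ≠ 0 := fun n => zpow_ne_zero n hrne
  have hinj : Function.Injective fun n : ℤ => r ^ n := zpow_right_injective₀ hr0 (ne_of_gt hr)
  have hs2 : ∀ n : ℤ, n ≠ 0 → (r ^ n) ^ 2 ≠ 1 := by
    intro n hn h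
    have h2 : r ^ (n * 2) = r ^ (0 : ℤ) := by
      rw [zpow_mul, zpow_zero, show ((2:ℤ)) = ((2:ℕ):ℤ) from rfl, zpow_natCast]
      exact h
    have := hinj h2
    omega
  have hz2 : ∀ n : ℤ, r ^ (2 * n) = (r ^ n) ^ 2 := by
    intro n
    rw [mul_comm, zpow_mul, show ((2:ℤ)) = ((2:ℕ):ℤ) from rfl, zpow_natCast]
  have ha_pp : ∀ (w z : ℤ → SC) (n : ℤ),
      pp (acoef w z r n) = (r ^ n * pp (w n) - pp (z n)) / ((r ^ n) ^ 2 - 1) := by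
    intro w z n
    rw [acoef, pp_smul, pp_sub, pp_smul, hz2]
    ring
  have ha_mm : ∀ (w z : ℤ → SC) (n : ℤ),
      mm (acoef w z r n) = (r ^ n * mm (w n) - mm (z n)) / ((r ^ n) ^ 2 - 1) := by
    intro w z n
    rw [acoef, mm_smul, mm_sub, mm_smul, hz2]
    ring
  -- vanishing of acoef off T
  have haoff : ∀ (w z : ℤ → SC), (∀ n : ℤ, n ∉ T → w n = 0 ∧ z n = 0) →
      ∀ n : ℤ, n ∉ T → acoef w z r n = 0 := by
    intro w z h n hn
    rw [acoef, (h n hn).1, (h n hn).2]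
    simp
  have hTnegout : ∀ n : ℤ, n ∉ T → -n ∉ T := by
    intro n hn hmem
    exact hn (by simpa using hTneg _ hmem)
  have hcoff : ∀ n : ℤ, n ∉ T → c n = 0 := fun n hn => (hTsupp n hn).1
  have hdoff : ∀ n : ℤ, n ∉ T → d n = 0 := fun n hn => (hTsupp n hn).2.1
  have hloff : ∀ n : ℤ, n ∉ T → l n = 0 := fun n hn => (hTsupp n hn).2.2.1
  have heoff : ∀ n : ℤ, n ∉ T → e n = 0 := fun n hn => (hTsupp n hn).2.2.2
  have hacloff : ∀ n : ℤ, n ∉ T → acoef c l r n = 0 :=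
    haoff c l (fun n hn => ⟨hcoff n hn, hloff n hn⟩)
  have hadeoff : ∀ n : ℤ, n ∉ T → acoef d e r n = 0 :=
    haoff d e (fun n hn => ⟨hdoff n hn, heoff n hn⟩)
  -- reality of the third-component coefficients
  have hreal : ∀ (w : ℤ → SC), (∀ n : ℤ, n ∉ T → w n = 0) →
      (∀ θ : ℝ, (∑ᶠ n : ℤ, SC.mul' (w n) (sexpZ n θ)).2 = 0) →
      ∀ n ∈ T, pp (w n) = mm (w (-n)) := by
    intro w hw hwreal n hn
    have hv := vanish T (fun n => (pp (w n) - mm (w (-n))) / 2) ?_ n hn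
    · linarith [hv]
    intro x hx
    have h := hwreal (Real.log x)
    rw [fourier_snd T hTneg w hw (Real.log x)] at h
    rw [← h]
    refine Finset.sum_congr rfl fun k _ => ?_
    congr 1
    rw [← Real.exp_log hx, exp_zpow, Real.exp_log hx]
  have hdpm : ∀ n ∈ T, pp (d n) = mm (d (-n)) := hreal d hdoff hdreal
  have hepm : ∀ n ∈ T, pp (e n) = mm (e (-n)) := hreal e heoff hereal
  -- key interpolation identities
  have hkeyP : ∀ (w z : ℤ → SC), ∀ n ∈ T,
      pp (acoef w z r n) * r ^ n + (pp (z n) - pp (acoef w z r n)) * r ^ (-n) = pp (w n) := by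
    intro w z n hn
    rw [ha_pp, zpow_neg]
    exact key1 _ _ _ (hzne n) (hs2 n (hTne0 n hn))
  have hkeyM : ∀ (w z : ℤ → SC), ∀ n ∈ T,
      mm (acoef w z r n) * r ^ n + (mm (z n) - mm (acoef w z r n)) * r ^ (-n) = mm (w n) := by
    intro w z n hn
    rw [ha_mm, zpow_neg]
    exact key1 _ _ _ (hzne n) (hs2 n (hTne0 n hn))
  -- reality identities for the third component coefficients
  have hA3e : ∀ n ∈ T, mm (e (-n)) - mm (acoef d e r (-n)) = pp (acoef d e r n) := by
    intro n hn
    rw [ha_mm d e (-n), ha_pp d e n, zpow_neg,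
      ← hdpm n hn, ← hepm n hn]
    exact key2 _ _ _ (hzne n) (hs2 n (hTne0 n hn))
  have hB3e : ∀ n ∈ T, pp (e (-n)) - pp (acoef d e r (-n)) = mm (acoef d e r n) := by
    intro n hn
    have h1 : pp (d (-n)) = mm (d n) := by
      have := hdpm (-n) (hTneg n hn)
      rwa [neg_neg] at this
    have h2 : pp (e (-n)) = mm (e n) := by
      have := hepm (-n) (hTneg n hn)
      rwa [neg_neg] at this
    rw [ha_pp d e (-n), ha_mm d e n, zpow_neg, h1, h2]
    exact key2 _ _ _ (hzne n) (hs2 n (hTne0 n hn))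
  -- converting the finsum conditions to sums over T
  have hmulz : ∀ v : SC, SC.mul' 0 v = 0 := by
    intro v
    simp [SC.mul', Prod.ext_iff]
  have hfinconv : ∀ (P : ℤ → Prop) (F : ℤ → SC), (∀ n : ℤ, n ∉ T → F n = 0) →
      (∀ n : ℤ, ¬ P n → F n = 0) → (∑ᶠ (n : ℤ) (_ : P n), F n) = ∑ n ∈ T, F n := by
    intro P F hF hP
    have h1 : ∀ n : ℤ, (∑ᶠ _ : P n, F n) = if P n then F n else 0 := fun n => finsum_eq_if
    rw [finsum_congr h1]
    have h2 : (Function.support fun n => if P n then F n else 0) ⊆ (T : Set ℤ) := by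
      intro n hn
      by_contra hnT
      apply hn
      simp [hF n hnT]
    rw [finsum_eq_sum_of_support_subset _ h2]
    refine Finset.sum_congr rfl fun n hn => ?_
    by_cases hp : P n
    · rw [if_pos hp]
    · rw [if_neg hp, hP n hp]
  have hcond1T : ∀ m : ℤ, m ≠ 0 →
      (∑ n ∈ T, (4 * (n:ℝ) * ((n:ℝ) - (m:ℝ))) •
          SC.mul' (acoef c l r n) (SC.conj' (acoef c l r (n - m)) - SC.conj' (l (n - m))))
        - (∑ n ∈ T, (4 * (n:ℝ) * ((m:ℝ) - (n:ℝ))) •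
          SC.mul' (acoef d e r n) (acoef d e r (m - n))) = 0 := by
    intro m hm
    have h := hcond1 m hm
    rw [hfinconv _ _ (fun n hn => by rw [hacloff n hn, hmulz, smul_zero])
        (fun n hp => ?_),
      hfinconv _ _ (fun n hn => by rw [hadeoff n hn, hmulz, smul_zero])
        (fun n hp => ?_)] at h
    · exact h
    · push_neg at hp
      by_cases h0 : n = 0
      · subst h0; simp
      · have h0' : n = m := by have := hp h0; omega
        subst h0'; simp
    · push_neg at hp
      by_cases h0 : n = 0
      · subst h0; simp
      · have h0' : n = m := by have := hp h0; omega
        subst h0'; simp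
  have hcond2T :
      (∑ n ∈ T, (4 * (n:ℝ) ^ 2) •
          (SC.mul' (acoef c l r n) (SC.conj' (acoef c l r n) - SC.conj' (l n)) +
            SC.mul' (acoef d e r n) (acoef d e r (-n)))) = 0 := by
    have h := hcond2
    rw [hfinconv _ _ (fun n hn => by
        rw [hacloff n hn, hadeoff n hn, hmulz, hmulz, add_zero, smul_zero])
      (fun n hp => ?_)] at h
    · exact h
    · push_neg at hp
      subst hp
      simp
  -- plus and minus parts of the conditions
  have hcond1pp : ∀ m : ℤ, m ≠ 0 →
      (∑ n ∈ T, 4 * (n:ℝ) * ((n:ℝ) - (m:ℝ)) *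
          (pp (acoef c l r n) * (mm (acoef c l r (n - m)) - mm (l (n - m)))))
        - (∑ n ∈ T, 4 * (n:ℝ) * ((m:ℝ) - (n:ℝ)) *
          (pp (acoef d e r n) * pp (acoef d e r (m - n)))) = 0 := by
    intro m hm
    have h := congrArg pp (hcond1T m hm)
    rw [pp_sub, pp_sum, pp_sum, pp_zero] at h
    rw [← h]
    congr 1
    · exact Finset.sum_congr rfl fun n _ => by
        rw [pp_smul, pp_mul', pp_sub, pp_conj', pp_conj']
    · exact Finset.sum_congr rfl fun n _ => by
        rw [pp_smul, pp_mul']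
  have hcond1mm : ∀ m : ℤ, m ≠ 0 →
      (∑ n ∈ T, 4 * (n:ℝ) * ((n:ℝ) - (m:ℝ)) *
          (mm (acoef c l r n) * (pp (acoef c l r (n - m)) - pp (l (n - m)))))
        - (∑ n ∈ T, 4 * (n:ℝ) * ((m:ℝ) - (n:ℝ)) *
          (mm (acoef d e r n) * mm (acoef d e r (m - n)))) = 0 := by
    intro m hm
    have h := congrArg mm (hcond1T m hm)
    rw [mm_sub, mm_sum, mm_sum, mm_zero] at h
    rw [← h]
    congr 1
    · exact Finset.sum_congr rfl fun n _ => by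
        rw [mm_smul, mm_mul', mm_sub, mm_conj', mm_conj']
    · exact Finset.sum_congr rfl fun n _ => by
        rw [mm_smul, mm_mul']
  have hcond2pp :
      (∑ n ∈ T, 4 * (n:ℝ) ^ 2 *
          (pp (acoef c l r n) * (mm (acoef c l r n) - mm (l n)) +
            pp (acoef d e r n) * pp (acoef d e r (-n)))) = 0 := by
    have h := congrArg pp hcond2T
    rw [pp_sum, pp_zero] at h
    rw [← h]
    exact Finset.sum_congr rfl fun n _ => by
      rw [pp_smul, pp_add, pp_mul', pp_mul', pp_sub, pp_conj', pp_conj']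
  have hcond2mm :
      (∑ n ∈ T, 4 * (n:ℝ) ^ 2 *
          (mm (acoef c l r n) * (pp (acoef c l r n) - pp (l n)) +
            mm (acoef d e r n) * mm (acoef d e r (-n)))) = 0 := by
    have h := congrArg mm hcond2T
    rw [mm_sum, mm_zero] at h
    rw [← h]
    exact Finset.sum_congr rfl fun n _ => by
      rw [mm_smul, mm_add, mm_mul', mm_mul', mm_sub, mm_conj', mm_conj']
  -- off-T vanishing of derivative coefficient families
  have hGoff : ∀ i : ℤ, i ∉ T → pp (acoef c l r i) * (i:ℝ) = 0 := by
    intro i hi; rw [hacloff i hi, pp_zero, zero_mul]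
  have hHoff : ∀ i : ℤ, i ∉ T → (mm (l (-i)) - mm (acoef c l r (-i))) * (i:ℝ) = 0 := by
    intro i hi
    rw [hloff (-i) (hTnegout i hi), hacloff (-i) (hTnegout i hi), mm_zero, sub_zero, zero_mul]
  have hPhoff : ∀ i : ℤ, i ∉ T → pp (acoef d e r i) * (i:ℝ) = 0 := by
    intro i hi; rw [hadeoff i hi, pp_zero, zero_mul]
  have hGqoff : ∀ i : ℤ, i ∉ T → (pp (l (-i)) - pp (acoef c l r (-i))) * (i:ℝ) = 0 := by
    intro i hi
    rw [hloff (-i) (hTnegout i hi), hacloff (-i) (hTnegout i hi), pp_zero, sub_zero, zero_mul]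
  have hHqoff : ∀ i : ℤ, i ∉ T → mm (acoef c l r i) * (i:ℝ) = 0 := by
    intro i hi; rw [hacloff i hi, mm_zero, zero_mul]
  have hPhqoff : ∀ i : ℤ, i ∉ T → mm (acoef d e r i) * (i:ℝ) = 0 := by
    intro i hi; rw [hadeoff i hi, mm_zero, zero_mul]
  -- fiberwise coefficient conditions, P side
  have hmP : ∀ m : ℤ, ∑ n ∈ T,
      ((fun i => pp (acoef c l r i) * (i:ℝ)) n *
        (fun i => (mm (l (-i)) - mm (acoef c l r (-i))) * (i:ℝ)) (m - n)
       - (fun i => pp (acoef d e r i) * (i:ℝ)) n *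
        (fun i => pp (acoef d e r i) * (i:ℝ)) (m - n)) = 0 := by
    intro m
    simp only []
    by_cases hm : m = 0
    · subst hm
      have e1 : ∑ n ∈ T,
          (pp (acoef c l r n) * (n:ℝ) * ((mm (l (-(0 - n))) - mm (acoef c l r (-(0 - n)))) * (((0 - n : ℤ)):ℝ))
            - pp (acoef d e r n) * (n:ℝ) * (pp (acoef d e r (0 - n)) * (((0 - n : ℤ)):ℝ)))
          = (1/4) * ∑ n ∈ T, 4 * (n:ℝ) ^ 2 *
              (pp (acoef c l r n) * (mm (acoef c l r n) - mm (l n)) +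
                pp (acoef d e r n) * pp (acoef d e r (-n))) := by
        rw [Finset.mul_sum]
        refine Finset.sum_congr rfl fun n _ => ?_
        simp only [zero_sub, neg_neg]
        push_cast
        ring
      rw [e1, hcond2pp, mul_zero]
    · have e1 : ∑ n ∈ T,
          (pp (acoef c l r n) * (n:ℝ) * ((mm (l (-(m - n))) - mm (acoef c l r (-(m - n)))) * (((m - n : ℤ)):ℝ))
            - pp (acoef d e r n) * (n:ℝ) * (pp (acoef d e r (m - n)) * (((m - n : ℤ)):ℝ)))
          = (1/4) * ((∑ n ∈ T, 4 * (n:ℝ) * ((n:ℝ) - (m:ℝ)) *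
              (pp (acoef c l r n) * (mm (acoef c l r (n - m)) - mm (l (n - m)))))
            - (∑ n ∈ T, 4 * (n:ℝ) * ((m:ℝ) - (n:ℝ)) *
              (pp (acoef d e r n) * pp (acoef d e r (m - n))))) := by
        rw [← Finset.sum_sub_distrib, Finset.mul_sum]
        refine Finset.sum_congr rfl fun n _ => ?_
        simp only [neg_sub]
        push_cast
        ring
      rw [e1, hcond1pp m hm, mul_zero]
  -- fiberwise coefficient conditions, Q side
  have hmQ : ∀ m : ℤ, ∑ n ∈ T,
      ((fun i => (pp (l (-i)) - pp (acoef c l r (-i))) * (i:ℝ)) n *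
        (fun i => mm (acoef c l r i) * (i:ℝ)) (m - n)
       - (fun i => mm (acoef d e r i) * (i:ℝ)) n *
        (fun i => mm (acoef d e r i) * (i:ℝ)) (m - n)) = 0 := by
    intro m
    simp only []
    rw [Finset.sum_sub_distrib]
    rw [line_swap T m (fun i => (pp (l (-i)) - pp (acoef c l r (-i))) * (i:ℝ))
      (fun i => mm (acoef c l r i) * (i:ℝ)) hGqoff hHqoff]
    rw [← Finset.sum_sub_distrib]
    by_cases hm : m = 0
    · subst hm
      have e1 : ∑ n ∈ T,
          ((pp (l (-(0 - n))) - pp (acoef c l r (-(0 - n)))) * (((0 - n : ℤ)):ℝ) *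
              (mm (acoef c l r n) * (n:ℝ))
            - mm (acoef d e r n) * (n:ℝ) * (mm (acoef d e r (0 - n)) * (((0 - n : ℤ)):ℝ)))
          = (1/4) * ∑ n ∈ T, 4 * (n:ℝ) ^ 2 *
              (mm (acoef c l r n) * (pp (acoef c l r n) - pp (l n)) +
                mm (acoef d e r n) * mm (acoef d e r (-n))) := by
        rw [Finset.mul_sum]
        refine Finset.sum_congr rfl fun n _ => ?_
        simp only [zero_sub, neg_neg]
        push_cast
        ring
      rw [e1, hcond2mm, mul_zero]
    · have e1 : ∑ n ∈ T,
          ((pp (l (-(m - n))) - pp (acoef c l r (-(m - n)))) * (((m - n : ℤ)):ℝ) *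
              (mm (acoef c l r n) * (n:ℝ))
            - mm (acoef d e r n) * (n:ℝ) * (mm (acoef d e r (m - n)) * (((m - n : ℤ)):ℝ)))
          = (1/4) * ((∑ n ∈ T, 4 * (n:ℝ) * ((n:ℝ) - (m:ℝ)) *
              (mm (acoef c l r n) * (pp (acoef c l r (n - m)) - pp (l (n - m)))))
            - (∑ n ∈ T, 4 * (n:ℝ) * ((m:ℝ) - (n:ℝ)) *
              (mm (acoef d e r n) * mm (acoef d e r (m - n))))) := by
        rw [← Finset.sum_sub_distrib, Finset.mul_sum]
        refine Finset.sum_congr rfl fun n _ => ?_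
        simp only [neg_sub]
        push_cast
        ring
      rw [e1, hcond1mm m hm, mul_zero]
  -- conformality identities
  have hPconf : ∀ x : ℝ, x ≠ 0 →
      (dlsum T (CA c l r) x) ^ 2 = (dlsum T (CA2 c l r) x) ^ 2 + (dlsum T (CA d e r) x) ^ 2 := by
    intro x hx
    have hconf := conf_of_coeffs T (fun i => pp (acoef c l r i) * (i:ℝ))
        (fun i => (mm (l (-i)) - mm (acoef c l r (-i))) * (i:ℝ))
        (fun i => pp (acoef d e r i) * (i:ℝ)) hHoff hPhoff hmP hx
    have e1 : (∑ i ∈ T, (pp (acoef c l r i) * (i:ℝ)) * x ^ (i - 1))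
        = dlsum T (CA c l r) x + dlsum T (CA2 c l r) x := by
      rw [dlsum, dlsum, ← Finset.sum_add_distrib]
      refine Finset.sum_congr rfl fun n _ => ?_
      simp only [CA, CA2]
      ring
    have e2 : (∑ i ∈ T, ((mm (l (-i)) - mm (acoef c l r (-i))) * (i:ℝ)) * x ^ (i - 1))
        = dlsum T (CA c l r) x - dlsum T (CA2 c l r) x := by
      rw [dlsum, dlsum, ← Finset.sum_sub_distrib]
      refine Finset.sum_congr rfl fun n _ => ?_
      simp only [CA, CA2]
      ring
    have e3 : (∑ i ∈ T, (pp (acoef d e r i) * (i:ℝ)) * x ^ (i - 1))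
        = dlsum T (CA d e r) x := by
      rw [dlsum]
      refine Finset.sum_congr rfl fun n hn => ?_
      simp only [CA]
      linear_combination (-(n:ℝ) * x ^ (n - 1) / 2) * (hA3e n hn)
    rw [e1, e2, e3] at hconf
    linear_combination hconf
  have hQconf : ∀ x : ℝ, x ≠ 0 →
      (dlsum T (CB c l r) x) ^ 2 = (dlsum T (CB2 c l r) x) ^ 2 + (dlsum T (CB d e r) x) ^ 2 := by
    intro x hx
    have hconf := conf_of_coeffs T (fun i => (pp (l (-i)) - pp (acoef c l r (-i))) * (i:ℝ))
        (fun i => mm (acoef c l r i) * (i:ℝ))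
        (fun i => mm (acoef d e r i) * (i:ℝ)) hHqoff hPhqoff hmQ hx
    have e1 : (∑ i ∈ T, ((pp (l (-i)) - pp (acoef c l r (-i))) * (i:ℝ)) * x ^ (i - 1))
        = dlsum T (CB c l r) x + dlsum T (CB2 c l r) x := by
      rw [dlsum, dlsum, ← Finset.sum_add_distrib]
      refine Finset.sum_congr rfl fun n _ => ?_
      simp only [CB, CB2]
      ring
    have e2 : (∑ i ∈ T, (mm (acoef c l r i) * (i:ℝ)) * x ^ (i - 1))
        = dlsum T (CB c l r) x - dlsum T (CB2 c l r) x := by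
      rw [dlsum, dlsum, ← Finset.sum_sub_distrib]
      refine Finset.sum_congr rfl fun n _ => ?_
      simp only [CB, CB2]
      ring
    have e3 : (∑ i ∈ T, (mm (acoef d e r i) * (i:ℝ)) * x ^ (i - 1))
        = dlsum T (CB d e r) x := by
      rw [dlsum]
      refine Finset.sum_congr rfl fun n hn => ?_
      simp only [CB]
      linear_combination (-(n:ℝ) * x ^ (n - 1) / 2) * (hB3e n hn)
    rw [e1, e2, e3] at hconf
    linear_combination hconf
  -- boundary values
  have hsexpU : ∀ θ : ℝ, (sexp θ).1 + (sexp θ).2 = 1 * Real.exp θ := by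
    intro θ
    show Real.cosh θ + Real.sinh θ = _
    rw [Real.cosh_add_sinh, one_mul]
  have hsexpV : ∀ θ : ℝ, (sexp θ).1 - (sexp θ).2 = 1 * Real.exp (-θ) := by
    intro θ
    show Real.cosh θ - Real.sinh θ = _
    rw [Real.cosh_sub_sinh, one_mul]
  have hrsexpU : ∀ θ : ℝ, (r • sexp θ).1 + (r • sexp θ).2 = r * Real.exp θ := by
    intro θ
    show r * Real.cosh θ + r * Real.sinh θ = _
    rw [← mul_add, Real.cosh_add_sinh]
  have hrsexpV : ∀ θ : ℝ, (r • sexp θ).1 - (r • sexp θ).2 = r * Real.exp (-θ) := by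
    intro θ
    show r * Real.cosh θ - r * Real.sinh θ = _
    rw [← mul_sub, Real.cosh_sub_sinh]
  have hbA : ∀ θ : ℝ,
      XX T (CA c l r) (CB c l r) (CA2 c l r) (CB2 c l r) (CA d e r) (CB d e r) (sexp θ)
        = α θ := by
    intro θ
    rw [hα θ]
    have h1 : lsum T (CA c l r) (1 * Real.exp θ) + lsum T (CB c l r) (1 * Real.exp (-θ))
        = (∑ᶠ n : ℤ, SC.mul' (l n) (sexpZ n θ)).1 := by
      rw [eval_boundary T hTneg (CA c l r) (CB c l r) (fun n => (pp (l n) + mm (l (-n))) / 2)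
          one_pos (fun n hn => by simp only [CA, CB, one_zpow, neg_neg, mul_one]; ring) θ,
        fourier_fst T hTneg l hloff θ]
    have h2 : lsum T (CA2 c l r) (1 * Real.exp θ) + lsum T (CB2 c l r) (1 * Real.exp (-θ))
        = (∑ᶠ n : ℤ, SC.mul' (l n) (sexpZ n θ)).2 := by
      rw [eval_boundary T hTneg (CA2 c l r) (CB2 c l r) (fun n => (pp (l n) - mm (l (-n))) / 2)
          one_pos (fun n hn => by simp only [CA2, CB2, one_zpow, neg_neg, mul_one]; ring) θ,
        fourier_snd T hTneg l hloff θ]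
    have h3 : lsum T (CA d e r) (1 * Real.exp θ) + lsum T (CB d e r) (1 * Real.exp (-θ))
        = (∑ᶠ n : ℤ, SC.mul' (e n) (sexpZ n θ)).1 := by
      rw [eval_boundary T hTneg (CA d e r) (CB d e r) (fun n => (pp (e n) + mm (e (-n))) / 2)
          one_pos (fun n hn => by simp only [CA, CB, one_zpow, neg_neg, mul_one]; ring) θ,
        fourier_fst T hTneg e heoff θ]
    refine Prod.ext ?_ (Prod.ext ?_ ?_)
    · show lsum T (CA c l r) ((sexp θ).1 + (sexp θ).2)
        + lsum T (CB c l r) ((sexp θ).1 - (sexp θ).2) = _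
      rw [hsexpU θ, hsexpV θ]
      exact h1
    · show lsum T (CA2 c l r) ((sexp θ).1 + (sexp θ).2)
        + lsum T (CB2 c l r) ((sexp θ).1 - (sexp θ).2) = _
      rw [hsexpU θ, hsexpV θ]
      exact h2
    · show lsum T (CA d e r) ((sexp θ).1 + (sexp θ).2)
        + lsum T (CB d e r) ((sexp θ).1 - (sexp θ).2) = _
      rw [hsexpU θ, hsexpV θ]
      exact h3
  have hbG : ∀ θ : ℝ,
      XX T (CA c l r) (CB c l r) (CA2 c l r) (CB2 c l r) (CA d e r) (CB d e r) (r • sexp θ)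
        = γ θ := by
    intro θ
    rw [hγ θ]
    have hco1 : ∀ (w z : ℤ → SC), ∀ n ∈ T,
        CA w z r n * r ^ n + CB w z r (-n) * r ^ (-n) = (pp (w n) + mm (w (-n))) / 2 := by
      intro w z n hn
      have k1 := hkeyP w z n hn
      have k2 := hkeyM w z (-n) (hTneg n hn)
      simp only [neg_neg] at k2
      simp only [CA, CB, neg_neg]
      linear_combination k1 / 2 + k2 / 2
    have hco2 : ∀ n ∈ T,
        CA2 c l r n * r ^ n + CB2 c l r (-n) * r ^ (-n) = (pp (c n) - mm (c (-n))) / 2 := by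
      intro n hn
      have k1 := hkeyP c l n hn
      have k2 := hkeyM c l (-n) (hTneg n hn)
      simp only [neg_neg] at k2
      simp only [CA2, CB2, neg_neg]
      linear_combination k1 / 2 - k2 / 2
    have h1 : lsum T (CA c l r) (r * Real.exp θ) + lsum T (CB c l r) (r * Real.exp (-θ))
        = (∑ᶠ n : ℤ, SC.mul' (c n) (sexpZ n θ)).1 := by
      rw [eval_boundary T hTneg (CA c l r) (CB c l r) (fun n => (pp (c n) + mm (c (-n))) / 2)
          hr0 (hco1 c l) θ, fourier_fst T hTneg c hcoff θ]
    have h2 : lsum T (CA2 c l r) (r * Real.exp θ) + lsum T (CB2 c l r) (r * Real.exp (-θ))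
        = (∑ᶠ n : ℤ, SC.mul' (c n) (sexpZ n θ)).2 := by
      rw [eval_boundary T hTneg (CA2 c l r) (CB2 c l r) (fun n => (pp (c n) - mm (c (-n))) / 2)
          hr0 hco2 θ, fourier_snd T hTneg c hcoff θ]
    have h3 : lsum T (CA d e r) (r * Real.exp θ) + lsum T (CB d e r) (r * Real.exp (-θ))
        = (∑ᶠ n : ℤ, SC.mul' (d n) (sexpZ n θ)).1 := by
      rw [eval_boundary T hTneg (CA d e r) (CB d e r) (fun n => (pp (d n) + mm (d (-n))) / 2)
          hr0 (hco1 d e) θ, fourier_fst T hTneg d hdoff θ]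
    refine Prod.ext ?_ (Prod.ext ?_ ?_)
    · show lsum T (CA c l r) ((r • sexp θ).1 + (r • sexp θ).2)
        + lsum T (CB c l r) ((r • sexp θ).1 - (r • sexp θ).2) = _
      rw [hrsexpU θ, hrsexpV θ]
      exact h1
    · show lsum T (CA2 c l r) ((r • sexp θ).1 + (r • sexp θ).2)
        + lsum T (CB2 c l r) ((r • sexp θ).1 - (r • sexp θ).2) = _
      rw [hrsexpU θ, hrsexpV θ]
      exact h2
    · show lsum T (CA d e r) ((r • sexp θ).1 + (r • sexp θ).2)
        + lsum T (CB d e r) ((r • sexp θ).1 - (r • sexp θ).2) = _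
      rw [hrsexpU θ, hrsexpV θ]
      exact h3
  -- the annulus is contained in the domain of smoothness
  have hAnnOm : Ann (1/2 : ℝ) (r ^ 2 + 1) ⊆ Om := by
    intro p hp
    obtain ⟨hx, hlo, hhi⟩ := hp
    have hprod : 0 < (p.1 + p.2) * (p.1 - p.2) := by nlinarith
    constructor
    · rcases lt_or_ge 0 (p.1 + p.2) with h | h
      · exact h
      · exfalso
        rcases lt_or_ge 0 (p.1 - p.2) with h2 | h2
        · nlinarith
        · nlinarith
    · rcases lt_or_ge 0 (p.1 - p.2) with h | h
      · exact h
      · exfalso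
        rcases lt_or_ge 0 (p.1 + p.2) with h2 | h2
        · nlinarith
        · nlinarith
  refine ⟨1/2, r ^ 2 + 1, by norm_num, by linarith,
    XX T (CA c l r) (CB c l r) (CA2 c l r) (CB2 c l r) (CA d e r) (CB d e r),
    ?_, ⟨?_, ?_, ?_, ?_⟩, fun θ => hbA θ, fun θ => hbG θ⟩
  · intro p hp
    exact (contDiffAt_XX T _ _ _ _ _ _ (mem_Om_ne (hAnnOm hp)).1
      (mem_Om_ne (hAnnOm hp)).2).contDiffWithinAt
  · intro p hp
    rw [pdxpdx_XX T _ _ _ _ _ _ (hAnnOm hp), pdypdy_XX T _ _ _ _ _ _ (hAnnOm hp)]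
  · intro p hp
    have hu := (mem_Om_ne (hAnnOm hp)).1
    have hv := (mem_Om_ne (hAnnOm hp)).2
    rw [pdx_XX T _ _ _ _ _ _ hu hv, pdy_XX T _ _ _ _ _ _ hu hv]
    have h1 := hPconf (p.1 + p.2) hu
    have h2 := hQconf (p.1 - p.2) hv
    simp only [ldot, DXP, DXM]
    linear_combination (-2 : ℝ) * h1 + (-2 : ℝ) * h2
  · intro p hp
    have hu := (mem_Om_ne (hAnnOm hp)).1
    have hv := (mem_Om_ne (hAnnOm hp)).2
    rw [pdx_XX T _ _ _ _ _ _ hu hv, pdy_XX T _ _ _ _ _ _ hu hv]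
    have h1 := hPconf (p.1 + p.2) hu
    have h2 := hQconf (p.1 - p.2) hv
    simp only [ldot, DXP, DXM]
    linear_combination (-1 : ℝ) * h1 + h2
  · -- nondegeneracy
    intro hall
    have hmem : ((r, 0) : SC) ∈ Ann (1/2 : ℝ) (r ^ 2 + 1) := by
      refine ⟨hr0, ?_, ?_⟩
      · show (1:ℝ)/2 < r ^ 2 - 0 ^ 2
        nlinarith
      · show r ^ 2 - (0:ℝ) ^ 2 < r ^ 2 + 1
        nlinarith
    have h0 := hall (r, 0) hmem
    have hu : ((r, 0) : SC).1 + ((r, 0) : SC).2 ≠ 0 := by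
      show r + 0 ≠ 0
      rw [add_zero]
      exact hrne
    have hv : ((r, 0) : SC).1 - ((r, 0) : SC).2 ≠ 0 := by
      show r - 0 ≠ 0
      rw [sub_zero]
      exact hrne
    have ef1 : (fun q => ((XX T (CA c l r) (CB c l r) (CA2 c l r) (CB2 c l r)
        (CA d e r) (CB d e r)) q).1)
        = fun q : SC => lsum T (CA c l r) (q.1 + q.2) + lsum T (CB c l r) (q.1 - q.2) := rfl
    have ef2 : (fun q => ((XX T (CA c l r) (CB c l r) (CA2 c l r) (CB2 c l r)
        (CA d e r) (CB d e r)) q).2.1)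
        = fun q : SC => lsum T (CA2 c l r) (q.1 + q.2) + lsum T (CB2 c l r) (q.1 - q.2) := rfl
    have ef3 : (fun q => ((XX T (CA c l r) (CB c l r) (CA2 c l r) (CB2 c l r)
        (CA d e r) (CB d e r)) q).2.2)
        = fun q : SC => lsum T (CA d e r) (q.1 + q.2) + lsum T (CB d e r) (q.1 - q.2) := rfl
    rw [ef1, ef2, ef3] at h0
    simp only [rdz, snormSq] at h0
    rw [pdx_scalar T _ _ hu hv, pdy_scalar T _ _ hu hv,
      pdx_scalar T _ _ hu hv, pdy_scalar T _ _ hu hv,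
      pdx_scalar T _ _ hu hv, pdy_scalar T _ _ hu hv] at h0
    have hc1 : ((r, 0) : SC).1 + ((r, 0) : SC).2 = r := by
      show r + 0 = r
      rw [add_zero]
    have hc2 : ((r, 0) : SC).1 - ((r, 0) : SC).2 = r := by
      show r - 0 = r
      rw [sub_zero]
    rw [hc1, hc2] at h0
    -- compute the derivative of γ at 0
    have hgfun : γ = fun θ : ℝ =>
        ((lsum T (CA c l r) (r * Real.exp θ) + lsum T (CB c l r) (r * Real.exp (-θ)) : ℝ),
          (lsum T (CA2 c l r) (r * Real.exp θ) + lsum T (CB2 c l r) (r * Real.exp (-θ)),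
            lsum T (CA d e r) (r * Real.exp θ) + lsum T (CB d e r) (r * Real.exp (-θ)))) := by
      funext θ
      rw [← hbG θ]
      refine Prod.ext ?_ (Prod.ext ?_ ?_)
      · show lsum T (CA c l r) ((r • sexp θ).1 + (r • sexp θ).2)
          + lsum T (CB c l r) ((r • sexp θ).1 - (r • sexp θ).2) = _
        rw [hrsexpU θ, hrsexpV θ]
      · show lsum T (CA2 c l r) ((r • sexp θ).1 + (r • sexp θ).2)
          + lsum T (CB2 c l r) ((r • sexp θ).1 - (r • sexp θ).2) = _
        rw [hrsexpU θ, hrsexpV θ]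
      · show lsum T (CA d e r) ((r • sexp θ).1 + (r • sexp θ).2)
          + lsum T (CB d e r) ((r • sexp θ).1 - (r • sexp θ).2) = _
        rw [hrsexpU θ, hrsexpV θ]
    have hd1 : HasDerivAt γ
        (((dlsum T (CA c l r) r * r - dlsum T (CB c l r) r * r : ℝ),
          (dlsum T (CA2 c l r) r * r - dlsum T (CB2 c l r) r * r,
            dlsum T (CA d e r) r * r - dlsum T (CB d e r) r * r)) : L3) 0 := by
      rw [hgfun]
      exact (hasDerivAt_boundary T (CA c l r) (CB c l r) hrne).prodMk
        ((hasDerivAt_boundary T (CA2 c l r) (CB2 c l r) hrne).prodMk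
          (hasDerivAt_boundary T (CA d e r) (CB d e r) hrne))
    apply hcausal 0
    rw [hd1.deriv]
    simp only [ldot]
    have h1 := hPconf r hrne
    have h2 := hQconf r hrne
    linear_combination (-(r^2) : ℝ) * h1 + (-(r^2) : ℝ) * h2 + (2 * r^2 : ℝ) * h0
end
end
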